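/- arXiv:1907.11905 — 4 statements merged into one kernel-verified Lean document; each statement's English description precedes it below -/
import Mathlib

section
/- Let k ≥ 5 be an odd integer, and let G be a graph with the property that every induced subgraph of G either is a k-ring or has a simplicial vertex. Then χ(G) ≤ f_k(ω(G)). -/
open SimpleGraph

/-- The closed neighborhood `N_G[v]` of a vertex `v`. -/
def closedNbhd {V : Type} (G : SimpleGraph V) (v : V) : Set V :=
  insert v (G.neighborSet v)

/-- `X` (indexed cyclically by `ZMod k`) is a ring partition of `G`:
a partition into `k` nonempty sets, each of which can be ordered so that the
closed neighborhoods are nested, with the last one covering `X i` and the first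
one being exactly `X (i-1) ∪ X i ∪ X (i+1)`. -/
def IsRingPartition {V : Type} (G : SimpleGraph V) (k : ℕ) (X : ZMod k → Set V) : Prop :=
  (∀ i, (X i).Nonempty) ∧
  (∀ v : V, ∃! i, v ∈ X i) ∧
  ∀ i, ∃ (m : ℕ) (hm : 0 < m) (u : Fin m → V),
    Function.Injective u ∧
    Set.range u = X i ∧
    (∀ j j' : Fin m, j ≤ j' → closedNbhd G (u j') ⊆ closedNbhd G (u j)) ∧
    X i ⊆ closedNbhd G (u ⟨m - 1, by omega⟩) ∧
    closedNbhd G (u ⟨0, hm⟩) = X (i - 1) ∪ X i ∪ X (i + 1)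

/-- `G` is a `k`-ring. -/
def IsRing {V : Type} (G : SimpleGraph V) (k : ℕ) : Prop :=
  ∃ X : ZMod k → Set V, IsRingPartition G k X

/-- `X` is a hyperhole partition of `G`: a partition into `k` nonempty cliques,
each complete to the two neighboring cliques and anticomplete to all remaining
vertices. -/
def IsHyperholePartition {V : Type} (G : SimpleGraph V) (k : ℕ) (X : ZMod k → Set V) : Prop :=
  (∀ i, (X i).Nonempty) ∧
  (∀ v : V, ∃! i, v ∈ X i) ∧
  (∀ i, G.IsClique (X i)) ∧
  (∀ i, ∀ x ∈ X i, ∀ y ∈ X (i - 1) ∪ X (i + 1), G.Adj x y) ∧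
  (∀ i, ∀ x ∈ X i, ∀ y, y ∉ X (i - 1) ∪ X i ∪ X (i + 1) → ¬ G.Adj x y)

/-- `G` is a `k`-hyperhole. -/
def IsHyperhole {V : Type} (G : SimpleGraph V) (k : ℕ) : Prop :=
  ∃ X : ZMod k → Set V, IsHyperholePartition G k X

/-- `X` is a hyperantihole partition of `G`: a partition into `k` nonempty cliques,
each complete to all vertices outside the two neighboring cliques (and itself),
and anticomplete to the two neighboring cliques. -/
def IsHyperantiholePartition {V : Type} (G : SimpleGraph V) (k : ℕ) (X : ZMod k → Set V) : Prop :=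
  (∀ i, (X i).Nonempty) ∧
  (∀ v : V, ∃! i, v ∈ X i) ∧
  (∀ i, G.IsClique (X i)) ∧
  (∀ i, ∀ x ∈ X i, ∀ y, y ∉ X (i - 1) ∪ X i ∪ X (i + 1) → G.Adj x y) ∧
  (∀ i, ∀ x ∈ X i, ∀ y ∈ X (i - 1) ∪ X (i + 1), ¬ G.Adj x y)

/-- `G` is a `k`-hyperantihole. -/
def IsHyperantihole {V : Type} (G : SimpleGraph V) (k : ℕ) : Prop :=
  ∃ X : ZMod k → Set V, IsHyperantiholePartition G k X

/-- A vertex is simplicial if its neighborhood is a clique. -/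
def IsSimplicial {V : Type} (G : SimpleGraph V) (v : V) : Prop :=
  G.IsClique (G.neighborSet v)

/-- A graph is perfect if every induced subgraph has chromatic number equal to
its clique number. -/
def IsPerfect {V : Type} (G : SimpleGraph V) : Prop :=
  ∀ S : Set V, (G.induce S).chromaticNumber = ((G.induce S).cliqueNum : ℕ∞)

/-- The function `f_k`: `⌊kn/(k-1)⌋` if `n ≡ 0, 1 (mod k-1)`, and `⌈kn/(k-1)⌉`
otherwise. -/
def ringF (k n : ℕ) : ℕ :=
  if n % (k - 1) ≤ 1 then k * n / (k - 1) else (k * n + (k - 2)) / (k - 1)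

/-- The function `g_k`: `⌊kn/(k-1)⌋` if `n mod (k-1) ∈ {0, …, (k-3)/2}`, and
`⌈kn/(k-1)⌉` if `n mod (k-1) ∈ {(k-1)/2, …, k-2}`. -/
def ringG (k n : ℕ) : ℕ :=
  if n % (k - 1) ≤ (k - 3) / 2 then k * n / (k - 1) else (k * n + (k - 2)) / (k - 1)

/-- The function `f_T`: `⌊5n/4⌋` if `n ≡ 0, 1 (mod 4)`, and `⌈5n/4⌉` if
`n ≡ 2, 3 (mod 4)`. -/
def fT (n : ℕ) : ℕ :=
  if n % 4 ≤ 1 then 5 * n / 4 else (5 * n + 3) / 4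

/-- `G` contains the complete graph `K_m` as a minor, witnessed by `m` pairwise
disjoint nonempty branch sets, each inducing a connected subgraph, with an edge
between every two of them. -/
def HasCompleteMinor {V : Type} (G : SimpleGraph V) (m : ℕ) : Prop :=
  ∃ S : Fin m → Set V,
    (∀ i, (S i).Nonempty) ∧
    (∀ i j, i ≠ j → Disjoint (S i) (S j)) ∧
    (∀ i, (G.induce (S i)).Connected) ∧
    (∀ i j, i ≠ j → ∃ x ∈ S i, ∃ y ∈ S j, G.Adj x y)

/-!
Vertices of a graph in the class are removed one simplicial vertex at a time; a simplicial vertex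
has fewer than `ω` neighbours and `ω ≤ f_k(ω)`, so only `k`-rings need a colouring.

In a `k`-ring of clique number `w`, order each bag by decreasing closed neighbourhood. If vertices
of depths `j` and `j'` in consecutive bags are adjacent, they and all shallower vertices of their
bags form a clique, so `j + j' ≤ w`. Hence it suffices to colour "bag `i`, depth `j`" so that each
bag gets distinct colours and a colour shared by consecutive bags occurs at depths summing to more
than `w`. For `w = 2s` take `C = f_k(w)` colours on a circle and give bag `i` the `2s - 1` colours
nearest to `⌊i (k - 1) C / (2k)⌋`, shallow depths going one way and deep depths the other. As `k`
is odd, the `k` centres close up after `(k - 1) / 2` turns; consecutive centres are between `s`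
and `C - s` apart, which is what `k w ≤ (k - 1) f_k(w)` guarantees. For odd `w` the middle depth
gets one extra colour, matching `f_k(w) = f_k(w - 1) + 1`.
-/

open Set Function

section RingF

variable {k : ℕ}

/-- That is, `f_k(n) = ⌈(k n - 1) / (k - 1)⌉` in one formula. -/
theorem ringF_eq_div (hk : 3 ≤ k) (n : ℕ) : ringF k n = (k * n + (k - 3)) / (k - 1) := by
  obtain ⟨d, rfl⟩ : ∃ d, k = d + 1 := ⟨k - 1, by omega⟩
  have hd : 0 < d := by omega
  have hr : n % d < d := Nat.mod_lt n hd
  have hdiv : ∀ c, ((d + 1) * n + c) / d = (n % d + c) / d + (n + n / d) := fun c => by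
    rw [← Nat.add_mul_div_left _ _ hd]
    congr 1
    linear_combination (Nat.mod_add_div n d).symm
  simp only [ringF, Nat.add_sub_cancel, hdiv]
  split_ifs with h
  · rw [← add_zero ((d + 1) * n), hdiv, Nat.div_eq_of_lt (by omega : n % d + 0 < d),
      Nat.div_eq_of_lt (by omega : n % d + (d + 1 - 3) < d)]
  · rw [Nat.div_eq_of_lt_le (by omega : 1 * d ≤ n % d + (d + 1 - 2)) (by omega),
      Nat.div_eq_of_lt_le (by omega : 1 * d ≤ n % d + (d + 1 - 3)) (by omega)]

theorem ringF_mono (hk : 3 ≤ k) : Monotone (ringF k) := fun a b hab => by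
  simp only [ringF_eq_div hk]
  gcongr

theorem le_ringF (hk : 3 ≤ k) (n : ℕ) : n ≤ ringF k n := by
  rw [ringF_eq_div hk, Nat.le_div_iff_mul_le (by omega)]
  calc n * (k - 1) ≤ n * k := Nat.mul_le_mul_left n (Nat.sub_le k 1)
    _ ≤ k * n + (k - 3) := by rw [mul_comm]; exact Nat.le_add_right _ _

/-- Since `k - 1` is even, `k w + k - 3` has even residue mod `k - 1` and so misses `k - 2`. -/
theorem mul_add_sub_three_mod_le_of_even (hk : 3 ≤ k) (hko : Odd k) {w : ℕ} (hw : Even w) :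
    (k * w + (k - 3)) % (k - 1) ≤ k - 3 := by
  have h2 : 2 ∣ k - 1 := by obtain ⟨j, rfl⟩ := hko; omega
  have hpar := Nat.mod_mod_of_dvd (k * w + (k - 3)) h2
  have hlt := Nat.mod_lt (k * w + (k - 3)) (by omega : 0 < k - 1)
  obtain ⟨j, rfl⟩ := hko
  obtain ⟨v, rfl⟩ := hw
  have : (2 * j + 1) * (v + v) = 2 * ((2 * j + 1) * v) := by ring
  omega

theorem mul_le_sub_one_mul_ringF_of_even (hk : 3 ≤ k) (hko : Odd k) {w : ℕ} (hw : Even w) :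
    k * w ≤ (k - 1) * ringF k w := by
  have := Nat.div_add_mod (k * w + (k - 3)) (k - 1)
  have := mul_add_sub_three_mod_le_of_even hk hko hw
  rw [ringF_eq_div hk]
  omega

theorem ringF_succ_of_even (hk : 3 ≤ k) (hko : Odd k) {w : ℕ} (hw : Even w) :
    ringF k (w + 1) = ringF k w + 1 := by
  have hmod := mul_add_sub_three_mod_le_of_even hk hko hw
  have hsplit : k * (w + 1) + (k - 3) = ((k * w + (k - 3)) % (k - 1) + 1) +
      (k - 1) * ((k * w + (k - 3)) / (k - 1) + 1) := by
    have := Nat.div_add_mod (k * w + (k - 3)) (k - 1)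
    rw [mul_add, mul_add]
    omega
  rw [ringF_eq_div hk, ringF_eq_div hk, hsplit, Nat.add_mul_div_left _ _ (by omega),
    Nat.div_eq_of_lt (by omega), zero_add]

end RingF

/-- Colours for the vertices of a `k`-ring of clique number `w`, the vertex of depth `j` in bag `i`
getting colour `c i j`. Vertices of consecutive bags may share a colour only if their depths sum
to more than `w`; adjacent ones never do, since together with the vertices of smaller depth they
span a clique. -/
structure IsRingPalette {α : Type*} (k w : ℕ) (c : ZMod k → ℕ → α) : Prop where
  injOn (i : ZMod k) : InjOn (c i) (Icc 1 (w - 1))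
  le_add_of_eq (i : ZMod k) {j j' : ℕ} :
    j ∈ Icc 1 (w - 1) → j' ∈ Icc 1 (w - 1) → c i j = c (i + 1) j' → w + 1 ≤ j + j'

section EvenPalette

def depthShift (s j : ℕ) : ℤ := if j ≤ s then (j : ℤ) - 1 else (s : ℤ) - j

variable {s j j' : ℕ}

lemma abs_depthShift_lt (hj : j ∈ Icc 1 (2 * s - 1)) : |depthShift s j| < s := by
  obtain ⟨hj1, hj2⟩ := hj
  unfold depthShift
  split_ifs <;> rw [abs_lt] <;> constructor <;> omega

lemma depthShift_injOn : InjOn (depthShift s) (Ici 1) := by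
  intro j hj j' hj' h
  simp only [mem_Ici] at hj hj'
  unfold depthShift at h
  split_ifs at h <;> omega

lemma le_add_of_le_depthShift_sub (hj : j ∈ Icc 1 (2 * s - 1)) (hj' : j' ∈ Icc 1 (2 * s - 1))
    (h : s ≤ depthShift s j - depthShift s j') : 2 * s + 1 ≤ j + j' := by
  obtain ⟨hj1, hj2⟩ := hj
  obtain ⟨hj1', hj2'⟩ := hj'
  unfold depthShift at h
  split_ifs at h <;> omega

lemma le_sub_or_le_sub_of_dvd {C s d a b : ℤ} (hd : s ≤ d) (hd' : d ≤ C - s) (ha : |a| < s)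
    (hb : |b| < s) (h : C ∣ d + b - a) : s ≤ a - b ∨ s ≤ b - a := by
  rw [abs_lt] at ha hb
  obtain ⟨q, hq⟩ := h
  have hq0 : 0 ≤ q := by nlinarith
  have hq1 : q ≤ 1 := by nlinarith
  interval_cases q <;> [left; right] <;> linarith

lemma mul_div_add_le_succ_mul_div {k L : ℕ} (hk : 0 < k) (h : s * k ≤ L) (n : ℕ) :
    n * L / k + s ≤ (n + 1) * L / k := by
  rw [← Nat.add_mul_div_right _ _ hk]
  exact Nat.div_le_div_right (by rw [add_mul, one_mul]; omega)

lemma succ_mul_div_le_mul_div_add {k L c : ℕ} (hk : 0 < k) (h : L ≤ c * k) (n : ℕ) :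
    (n + 1) * L / k ≤ n * L / k + c := by
  rw [← Nat.add_mul_div_right _ _ hk]
  exact Nat.div_le_div_right (by rw [add_mul, one_mul]; omega)

variable {k C : ℕ}

/-- Bag `i` is centred at `⌊i L / k⌋` with `L = (k - 1) C / 2 ≡ 0 mod C`: the `k` centres wind
`(k - 1) / 2` times round the `C` colours, consecutive ones about `C / 2 - C / (2k)` apart. -/
def evenRingPalette (k C s : ℕ) (i : ZMod k) (j : ℕ) : ZMod C :=
  (((i.val * ((k - 1) / 2 * C) / k : ℕ) : ℤ) + depthShift s j : ℤ)

lemma evenRingPalette_add_one [NeZero k] (i : ZMod k) (j : ℕ) :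
    evenRingPalette k C s (i + 1) j =
      ((((i.val + 1) * ((k - 1) / 2 * C) / k : ℕ) : ℤ) + depthShift s j : ℤ) := by
  have hval : (i + 1).val = (i.val + 1) % k := by
    rw [ZMod.val_add, ZMod.val_one_eq_one_mod, Nat.add_mod_mod]
  rw [evenRingPalette, hval]
  conv_rhs => rw [← Nat.mod_add_div (i.val + 1) k]
  rw [add_mul, mul_assoc k, Nat.add_mul_div_left _ _ (NeZero.pos k)]
  push_cast
  simp

theorem isRingPalette_evenRingPalette (hko : Odd k) (hC : k * (2 * s) ≤ (k - 1) * C) :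
    IsRingPalette k (2 * s) (evenRingPalette k C s) := by
  have hk : 0 < k := hko.pos
  have : NeZero k := ⟨hk.ne'⟩
  obtain ⟨r, rfl⟩ := hko
  have hL : (2 * r + 1 - 1) / 2 * C = r * C := by
    rw [Nat.add_sub_cancel, Nat.mul_div_cancel_left r two_pos]
  rw [Nat.add_sub_cancel] at hC
  have h2s : 2 * s ≤ C := by nlinarith
  have hsL : s * (2 * r + 1) ≤ r * C := by nlinarith
  have hLC : r * C ≤ (C - s) * (2 * r + 1) := by
    rw [Nat.sub_mul]
    exact Nat.le_sub_of_add_le (by nlinarith)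
  constructor
  · intro i j hj j' hj' h
    rw [evenRingPalette, evenRingPalette, ZMod.intCast_eq_intCast_iff_dvd_sub] at h
    have ha := abs_depthShift_lt hj
    have hb := abs_depthShift_lt hj'
    have hba := Int.eq_zero_of_abs_lt_dvd (x := depthShift s j' - depthShift s j)
      (by convert h using 1; ring) (by rw [abs_lt] at ha hb ⊢; constructor <;> omega)
    exact depthShift_injOn (mem_Ici.2 hj.1) (mem_Ici.2 hj'.1) (by linarith)
  · intro i j j' hj hj' h
    rw [evenRingPalette, evenRingPalette_add_one, ZMod.intCast_eq_intCast_iff_dvd_sub, hL] at h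
    have h1 := mul_div_add_le_succ_mul_div hk hsL i.val
    have h2 := succ_mul_div_le_mul_div_add hk hLC i.val
    rcases le_sub_or_le_sub_of_dvd (C := C)
        (d := (((i.val + 1) * (r * C) / (2 * r + 1) : ℕ) : ℤ) -
          ((i.val * (r * C) / (2 * r + 1) : ℕ) : ℤ))
        (by omega) (by omega)
        (abs_depthShift_lt hj) (abs_depthShift_lt hj') (by convert h using 1; ring) with h | h
    · exact le_add_of_le_depthShift_sub hj hj' h
    · exact add_comm j' j ▸ le_add_of_le_depthShift_sub hj' hj h

end EvenPalette

section OddPalette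

variable {α : Type*} {k s : ℕ} {c : ZMod k → ℕ → α} {i : ZMod k} {j : ℕ}

def insertMiddleDepth (s : ℕ) (c : ZMod k → ℕ → α) (i : ZMod k) (j : ℕ) : Option α :=
  if j = s + 1 then none else some (c i (if j ≤ s then j else j - 1))

lemma insertMiddleDepth_cases (i : ZMod k) (hj : j ∈ Icc 1 (2 * s + 1 - 1)) :
    j = s + 1 ∧ insertMiddleDepth s c i j = none ∨
      ∃ j₀ ∈ Icc 1 (2 * s - 1), (j₀ = j ∧ j ≤ s ∨ j₀ + 1 = j ∧ s + 1 ≤ j₀) ∧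
        insertMiddleDepth s c i j = some (c i j₀) := by
  obtain ⟨hj1, hj2⟩ := hj
  by_cases hjs : j = s + 1
  · exact Or.inl ⟨hjs, if_pos hjs⟩
  refine Or.inr ⟨if j ≤ s then j else j - 1, ?_, ?_, by rw [insertMiddleDepth, if_neg hjs]⟩ <;>
    split_ifs <;> first | omega | exact ⟨by omega, by omega⟩

theorem IsRingPalette.insertMiddleDepth (hc : IsRingPalette k (2 * s) c) :
    IsRingPalette k (2 * s + 1) (insertMiddleDepth s c) := by
  constructor
  · intro i j hj j' hj' h
    rcases insertMiddleDepth_cases (c := c) i hj with ⟨rfl, h₁⟩ | ⟨j₀, hj₀, hjj₀, h₁⟩ <;>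
      rcases insertMiddleDepth_cases (c := c) i hj' with ⟨rfl, h₂⟩ | ⟨j₀', hj₀', hjj₀', h₂⟩ <;>
      simp only [h₁, h₂, reduceCtorEq, Option.some_inj] at h
    · rfl
    · have := hc.injOn i hj₀ hj₀' h
      omega
  · intro i j j' hj hj' h
    rcases insertMiddleDepth_cases (c := c) i hj with ⟨rfl, h₁⟩ | ⟨j₀, hj₀, hjj₀, h₁⟩ <;>
      rcases insertMiddleDepth_cases (c := c) (i + 1) hj' with
        ⟨rfl, h₂⟩ | ⟨j₀', hj₀', hjj₀', h₂⟩ <;>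
      simp only [h₁, h₂, reduceCtorEq, Option.some_inj] at h
    · omega
    · have := hc.le_add_of_eq i hj₀ hj₀' h
      omega

end OddPalette

section Graph

variable {W : Type} {H : SimpleGraph W}

lemma adj_of_closedNbhd_subset {x y x' y' : W} (hxy : H.Adj x y)
    (hx : closedNbhd H x ⊆ closedNbhd H x') (hy : closedNbhd H y ⊆ closedNbhd H y')
    (hne : x' ≠ y') : H.Adj x' y' := by
  have hx' : x' ∈ closedNbhd H y := by
    rcases hx (Or.inr hxy) with rfl | h
    exacts [Or.inl rfl, Or.inr h.symm]
  exact ((hy hx').resolve_left hne).symm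

lemma isClique_dominators_union {s t : Set W} (hs : H.IsClique s) (ht : H.IsClique t)
    {x y : W} (hxy : H.Adj x y) :
    H.IsClique ({x' ∈ s | closedNbhd H x ⊆ closedNbhd H x'} ∪
      {y' ∈ t | closedNbhd H y ⊆ closedNbhd H y'}) := by
  have : Std.Symm H.Adj := ⟨fun _ _ h => h.symm⟩
  rw [IsClique, pairwise_union_of_symm]
  exact ⟨hs.subset (sep_subset _ _), ht.subset (sep_subset _ _),
    fun x' hx' y' hy' hne => adj_of_closedNbhd_subset hxy hx'.2 hy'.2 hne⟩

lemma SimpleGraph.IsClique.ncard_le_cliqueNum [Finite W] {s : Set W} (hs : H.IsClique s) :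
    s.ncard ≤ H.cliqueNum := by
  have := Fintype.ofFinite W
  classical
  rw [ncard_eq_toFinset_card']
  exact IsClique.card_le_cliqueNum (tc := by simpa using hs)

lemma le_ncard_dominators [Finite W] {m : ℕ} {u : Fin m → W} (hu : Injective u)
    (hnest : ∀ j j' : Fin m, j ≤ j' → closedNbhd H (u j') ⊆ closedNbhd H (u j))
    (a : Fin m) : a.1 + 1 ≤ {x ∈ range u | closedNbhd H (u a) ⊆ closedNbhd H x}.ncard := by
  calc a.1 + 1 = (u '' Iic a).ncard := by
        rw [ncard_image_of_injective _ hu, ← Finset.coe_Iic, ncard_coe_finset, Fin.card_Iic]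
    _ ≤ _ := ncard_le_ncard <| by
        rintro _ ⟨b, hb, rfl⟩
        exact ⟨mem_range_self b, hnest b a hb⟩

namespace IsRingPartition

variable {k : ℕ} {X : ZMod k → Set W}

lemma eq_of_mem (hX : IsRingPartition H k X) {x : W} {i j : ZMod k} (hi : x ∈ X i)
    (hj : x ∈ X j) : i = j :=
  (hX.2.1 x).unique hi hj

lemma disjoint_add_one (hX : IsRingPartition H k X) (hk : k ≠ 1) (i : ZMod k) :
    Disjoint (X i) (X (i + 1)) := by
  have : Nontrivial (ZMod k) := ZMod.nontrivial_iff.2 hk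
  exact disjoint_left.2 fun x hi hi' => one_ne_zero (left_eq_add.1 (hX.eq_of_mem hi hi'))

lemma isClique (hX : IsRingPartition H k X) (i : ZMod k) : H.IsClique (X i) := by
  obtain ⟨m, hm, u, -, hrange, hnest, hlast, -⟩ := hX.2.2 i
  rw [← hrange]
  rintro _ ⟨a, rfl⟩ _ ⟨b, rfl⟩ hab
  have hle : a ≤ ⟨m - 1, by omega⟩ := Fin.mk_le_mk.2 (by omega)
  exact (hnest _ _ hle (hlast (hrange ▸ mem_range_self b))).resolve_left (Ne.symm hab)

lemma mem_of_adj (hX : IsRingPartition H k X) {x y : W} {i : ZMod k} (hx : x ∈ X i)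
    (hxy : H.Adj x y) : y ∈ X (i - 1) ∪ X i ∪ X (i + 1) := by
  obtain ⟨m, hm, u, -, hrange, hnest, -, hfirst⟩ := hX.2.2 i
  obtain ⟨a, rfl⟩ := hrange ▸ hx
  exact hfirst ▸ hnest ⟨0, hm⟩ a (Fin.mk_le_mk.2 (Nat.zero_le _)) (Or.inr hxy)

end IsRingPartition

variable {k : ℕ}

/-- The vertex `x` of a `k`-ring lies in bag `bag x` at depth `depth x`, depth `1` being a vertex
with the largest closed neighbourhood in its bag. -/
structure IsRingLabelling (H : SimpleGraph W) (w : ℕ) (bag : W → ZMod k) (depth : W → ℕ) :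
    Prop where
  depth_mem (x : W) : depth x ∈ Icc 1 (w - 1)
  bag_of_adj {x y : W} : H.Adj x y → bag y = bag x - 1 ∨ bag y = bag x ∨ bag y = bag x + 1
  eq_of_bag_eq_of_depth_eq {x y : W} : bag x = bag y → depth x = depth y → x = y
  add_le_of_adj {x y : W} : H.Adj x y → bag y = bag x + 1 → depth x + depth y ≤ w

theorem IsRingLabelling.colorable {α : Type*} [Fintype α] {w : ℕ} {bag : W → ZMod k}
    {depth : W → ℕ} (hL : IsRingLabelling H w bag depth) {c : ZMod k → ℕ → α}
    (hc : IsRingPalette k w c) : H.Colorable (Fintype.card α) := by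
  refine Coloring.colorable (Coloring.mk (fun x => c (bag x) (depth x)) fun {x y} hxy h => ?_)
  have hnext : ∀ {x y}, H.Adj x y → bag y = bag x + 1 →
      c (bag x) (depth x) ≠ c (bag y) (depth y) := fun {x y} hxy hb h => by
    rw [hb] at h
    have := hc.le_add_of_eq _ (hL.depth_mem x) (hL.depth_mem y) h
    have := hL.add_le_of_adj hxy hb
    omega
  rcases hL.bag_of_adj hxy with hb | hb | hb
  · exact hnext hxy.symm (by rw [hb, sub_add_cancel]) h.symm
  · rw [hb] at h
    exact hxy.ne (hL.eq_of_bag_eq_of_depth_eq hb.symm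
      (hc.injOn _ (hL.depth_mem x) (hL.depth_mem y) h))
  · exact hnext hxy hb h

theorem IsRingPartition.exists_isRingLabelling [Finite W] {X : ZMod k → Set W}
    (hX : IsRingPartition H k X) (hk : k ≠ 1) :
    ∃ (bag : W → ZMod k) (depth : W → ℕ), IsRingLabelling H H.cliqueNum bag depth := by
  choose bag hbag using fun x => (hX.2.1 x).exists
  choose m hm u hu hrange hnest hlast hfirst using hX.2.2
  choose pos hpos using fun x => hrange (bag x) ▸ hbag x
  have hbag_eq : ∀ {x i}, x ∈ X i → bag x = i := fun h => hX.eq_of_mem (hbag _) h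
  have hdom : ∀ x,
      (pos x).1 + 1 ≤ {x' ∈ X (bag x) | closedNbhd H x ⊆ closedNbhd H x'}.ncard :=
    fun x => by simpa only [hpos, hrange] using le_ncard_dominators (hu _) (hnest _) (pos x)
  have hadd : ∀ {x y}, H.Adj x y → bag y = bag x + 1 →
      (pos x).1 + 1 + ((pos y).1 + 1) ≤ H.cliqueNum := by
    intro x y hxy hb
    have hdisj : Disjoint (X (bag x)) (X (bag y)) := hb ▸ hX.disjoint_add_one hk _
    calc (pos x).1 + 1 + ((pos y).1 + 1) ≤ _ := add_le_add (hdom x) (hdom y)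
      _ = _ := (ncard_union_eq (hdisj.mono (sep_subset _ _) (sep_subset _ _))).symm
      _ ≤ _ := (isClique_dominators_union (hX.isClique _) (hX.isClique _) hxy).ncard_le_cliqueNum
  refine ⟨bag, fun x => (pos x).1 + 1, fun x => ⟨le_add_self, ?_⟩, fun {x y} hxy => ?_,
    fun {x y} hb hd => ?_, hadd⟩
  · -- `x` is adjacent to the first vertex of the previous bag
    set i := bag x
    have hv : u (i - 1) ⟨0, hm _⟩ ∈ X (i - 1) := hrange _ ▸ mem_range_self _
    have hx : x ∈ X (i - 1 + 1) := by rw [sub_add_cancel]; exact hbag x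
    have hxv : H.Adj (u (i - 1) ⟨0, hm _⟩) x := by
      refine ((hfirst (i - 1)).symm ▸ Or.inr hx : x ∈ closedNbhd H _).resolve_left ?_
      exact disjoint_left.1 (hX.disjoint_add_one hk (i - 1)) hv ∘ (· ▸ hx)
    have := hadd hxv (by rw [hbag_eq hv, sub_add_cancel])
    omega
  · rcases hX.mem_of_adj (hbag x) hxy with (h | h) | h
    exacts [Or.inl (hbag_eq h), Or.inr (Or.inl (hbag_eq h)), Or.inr (Or.inr (hbag_eq h))]
  · have key : ∀ i j (a : Fin (m i)) (b : Fin (m j)), i = j → a.1 = b.1 → u i a = u j b := by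
      rintro i _ a b rfl h
      rw [Fin.ext h]
    rw [← hpos x, ← hpos y]
    exact key _ _ _ _ hb (by simpa using hd)

theorem IsRing.colorable_ringF [Finite W] (hk : 3 ≤ k) (hko : Odd k) (hR : IsRing H k) :
    H.Colorable (ringF k H.cliqueNum) := by
  obtain ⟨X, hX⟩ := hR
  obtain ⟨bag, depth, hL⟩ := hX.exists_isRingLabelling (by omega)
  obtain ⟨x, -⟩ := hX.1 0
  obtain ⟨hx1, hx2⟩ := hL.depth_mem x
  obtain ⟨s, hs⟩ := Nat.even_or_odd' H.cliqueNum
  have hpal := isRingPalette_evenRingPalette hko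
    (mul_le_sub_one_mul_ringF_of_even hk hko (even_two_mul s))
  have : NeZero (ringF k (2 * s)) := ⟨by have := le_ringF hk (2 * s); omega⟩
  rcases hs with hs | hs <;> rw [hs] at hL ⊢
  · simpa using hL.colorable hpal
  · simpa [ringF_succ_of_even hk hko (even_two_mul s)] using hL.colorable hpal.insertMiddleDepth

lemma IsSimplicial.ncard_neighborSet_lt_cliqueNum [Finite W] {v : W} (hv : IsSimplicial H v) :
    (H.neighborSet v).ncard < H.cliqueNum := by
  have hcl : H.IsClique (insert v (H.neighborSet v)) := isClique_insert.2 ⟨hv, fun _ h _ => h⟩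
  have := hcl.ncard_le_cliqueNum
  rwa [ncard_insert_of_notMem (H.notMem_neighborSet_self)] at this

theorem colorable_of_colorable_induce_compl_singleton [Finite W] {v : W} {n : ℕ}
    (hv : (H.neighborSet v).ncard < n) (h : (H.induce {v}ᶜ).Colorable n) : H.Colorable n := by
  classical
  obtain ⟨C⟩ := h
  let f : H.neighborSet v → Fin n := fun y => C ⟨y, (H.ne_of_adj y.2).symm⟩
  obtain ⟨c, hc⟩ : ∃ c, c ∉ range f := by
    by_contra! hsurj
    have := Nat.card_le_card_of_surjective f fun c => hsurj c
    rw [Nat.card_eq_fintype_card, Fintype.card_fin, Nat.card_coe_set_eq] at this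
    omega
  refine ⟨Coloring.mk (fun x => if hx : x = v then c else C ⟨x, hx⟩) fun {x y} hxy => ?_⟩
  by_cases hx : x = v <;> by_cases hy : y = v
  · exact absurd (hx.trans hy.symm) hxy.ne
  · subst hx
    simp only [dif_neg hy]
    exact fun h => hc ⟨⟨y, hxy⟩, h.symm⟩
  · subst hy
    simp only [dif_neg hx]
    exact fun h => hc ⟨⟨x, hxy.symm⟩, h⟩
  · simp only [dif_neg hx, dif_neg hy]
    exact C.valid (show (H.induce {v}ᶜ).Adj ⟨x, hx⟩ ⟨y, hy⟩ from hxy)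

theorem colorable_of_forall_induce [Finite W] {G : SimpleGraph W} {n : ℕ}
    (hω : G.cliqueNum ≤ n)
    (h : ∀ S : Set W, S.Nonempty →
      (G.induce S).Colorable n ∨ ∃ v : S, IsSimplicial (G.induce S) v) :
    G.Colorable n := by
  suffices hS : ∀ S : Set W, (G.induce S).Colorable n from
    (hS univ).of_hom (induceUnivIso G).symm.toHom
  intro S
  induction hc : S.ncard using Nat.strong_induction_on generalizing S with
  | _ c ih =>
    rcases S.eq_empty_or_nonempty with rfl | hne
    · exact Colorable.of_isEmpty n
    rcases h S hne with hcol | ⟨v, hv⟩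
    · exact hcol
    refine colorable_of_colorable_induce_compl_singleton
      (hv.ncard_neighborSet_lt_cliqueNum.trans_le ((cliqueNum_induce_le S).trans hω)) ?_
    refine (ih _ (hc ▸ ncard_sdiff_singleton_lt_of_mem v.2) (S \ {v.1}) rfl).of_hom
      ⟨fun x => ⟨x.1.1, x.1.2, fun h => x.2 (Subtype.ext h)⟩, fun h => h⟩

end Graph

/-- For odd `k ≥ 5`, if every (nonempty) induced subgraph of `G` is a `k`-ring
or has a simplicial vertex, then `χ(G) ≤ f_k(ω(G))`. -/
theorem Rk_class_chromaticNumber_le {V : Type} [Fintype V]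
    (k : ℕ) (hk : 5 ≤ k) (hko : Odd k) (G : SimpleGraph V)
    (h : ∀ S : Set V, S.Nonempty →
      IsRing (G.induce S) k ∨ ∃ v : S, IsSimplicial (G.induce S) v) :
    G.chromaticNumber ≤ (ringF k G.cliqueNum : ℕ∞) := by
  have hk3 : 3 ≤ k := by omega
  refine (colorable_of_forall_induce (le_ringF hk3 _) fun S hS => (h S hS).imp_left fun hR => ?_)
    |>.chromaticNumber_le
  exact (hR.colorable_ringF hk3 hko).mono (ringF_mono hk3 (cliqueNum_induce_le S))
end

section
/- Let k ≥ 4 be an integer, let A be a k-hyperantihole, and let (X_1, …, X_k) be a partition of V(A) into nonempty cliques such that for each i, X_i is complete to V(A) ∖ (X_{i-1} ∪ X_i ∪ X_{i+1}) and anticomplete to X_{i-1} ∪ X_{i+1}. Then for every i ∈ {1, …, k}, the induced subgraph A ∖ X_i is perfect. Furthermore, if k is even, then A itself is perfect. -/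
open SimpleGraph

/-!
Two distinct non-adjacent vertices of a hyperantihole lie in cyclically consecutive parts, so
colouring each vertex by the parity of the index of its part (counted from the deleted part, or
from `0` when `k` is even) properly colours the complement with two colours.

A graph whose vertex set is the union of two cliques `B` and `Bᶜ` has `χ = ω` (König). For
`s ⊆ Bᶜ` with set `N(s)` of non-neighbours in `B`, the set `s ∪ (B \ N(s))` is a clique, so
`|s| ≤ |N(s)| + (ω - |B|)`. Hall's theorem with this deficiency matches all but `ω - |B|`
vertices of `Bᶜ` to distinct non-neighbours in `B`; matched vertices share the colour of their
partner and the rest get `ω - |B|` fresh colours, `ω` colours in all.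
-/

open Finset

theorem Finset.exists_injective_of_card_le_biUnion_card_add {ι α : Type*} [DecidableEq α]
    (t : ι → Finset α) (d : ℕ) (h : ∀ s : Finset ι, #s ≤ #(s.biUnion t) + d) :
    ∃ f : ι → α ⊕ Fin d, Function.Injective f ∧ ∀ i a, f i = .inl a → a ∈ t i := by
  let t' (i : ι) : Finset (α ⊕ Fin d) := (t i).disjSum univ
  have hall (s : Finset ι) : #s ≤ #(s.biUnion t') := by
    obtain rfl | ⟨i, hi⟩ := s.eq_empty_or_nonempty
    · simp
    have hsub : (s.biUnion t).disjSum univ ⊆ s.biUnion t' := by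
      rintro (a | j) hx
      · obtain ⟨i', hi', ha⟩ := mem_biUnion.mp (inl_mem_disjSum.mp hx)
        exact mem_biUnion.mpr ⟨i', hi', inl_mem_disjSum.mpr ha⟩
      · exact mem_biUnion.mpr ⟨i, hi, inr_mem_disjSum.mpr (mem_univ j)⟩
    calc #s ≤ #(s.biUnion t) + d := h s
      _ = #((s.biUnion t).disjSum (univ : Finset (Fin d))) := by simp
      _ ≤ _ := card_le_card hsub
  obtain ⟨f, hf, hft⟩ := (all_card_le_biUnion_card_iff_exists_injective t').mp hall
  exact ⟨f, hf, fun i a ha => inl_mem_disjSum.mp (ha ▸ hft i)⟩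

theorem ZMod.val_add_one_of_add_one_ne_zero {n : ℕ} [NeZero n] {x : ZMod n} (h : x + 1 ≠ 0) :
    (x + 1).val = x.val + 1 := by
  obtain hn | hn := Nat.lt_or_ge 1 n
  · have : Fact (1 < n) := ⟨hn⟩
    have hval : (x + 1).val ≠ 0 := by rwa [ne_eq, ZMod.val_eq_zero]
    rw [ZMod.val_add, ZMod.val_one] at hval ⊢
    have hne : x.val + 1 ≠ n := fun heq => hval (by rw [heq, Nat.mod_self])
    exact Nat.mod_eq_of_lt (by have := x.val_lt; omega)
  · obtain rfl : n = 1 := by have := NeZero.ne n; omega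
    exact absurd (Subsingleton.elim _ _) h

namespace SimpleGraph

variable {W : Type*} {G : SimpleGraph W}

theorem compl_induce (G : SimpleGraph W) (s : Set W) : (G.induce s)ᶜ = Gᶜ.induce s := by
  ext u v
  simp [Subtype.ext_iff]

theorem card_add_card_le_cliqueNum [Fintype W] {B : Set W} (hB : G.IsClique B)
    (hBc : G.IsClique Bᶜ) (s : Finset ↥Bᶜ) (r : Finset ↥B) (hsr : ∀ a ∈ s, ∀ b ∈ r, G.Adj a b) :
    #s + #r ≤ G.cliqueNum := by
  classical
  have hK : G.IsClique ((s.map (.subtype _) ∪ r.map (.subtype _) : Finset W) : Set W) := by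
    rw [coe_union, IsClique, Set.pairwise_union]
    refine ⟨hBc.subset (by simp), hB.subset (by simp), ?_⟩
    simp only [coe_map, Set.mem_image, mem_coe]
    rintro _ ⟨a, ha, rfl⟩ _ ⟨b, hb, rfl⟩ -
    exact ⟨hsr a ha b hb, (hsr a ha b hb).symm⟩
  have hdisj : Disjoint (s.map (.subtype _)) (r.map (.subtype _)) := by
    rw [Finset.disjoint_left]
    rintro _ ha hb
    obtain ⟨a, -, rfl⟩ := mem_map.mp ha
    obtain ⟨b, -, hb⟩ := mem_map.mp hb
    simp only [Function.Embedding.coe_subtype] at hb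
    exact a.2 (hb ▸ b.2)
  simpa [card_union_of_disjoint hdisj] using hK.card_le_cliqueNum

theorem colorable_cliqueNum_of_isClique_of_isClique_compl [Fintype W] {B : Set W}
    (hB : G.IsClique B) (hBc : G.IsClique Bᶜ) : G.Colorable G.cliqueNum := by
  classical
  let t (a : ↥Bᶜ) : Finset B := {b | ¬ G.Adj a b}
  have hall (s : Finset ↥Bᶜ) : #s ≤ #(s.biUnion t) + (G.cliqueNum - Fintype.card B) := by
    have hK := card_add_card_le_cliqueNum hB hBc s (s.biUnion t)ᶜ fun a ha b hb => by
      by_contra hab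
      exact mem_compl.mp hb (mem_biUnion.mpr ⟨a, ha, by simpa [t] using hab⟩)
    have := (s.biUnion t).card_compl_add_card
    omega
  obtain ⟨f, hf, hft⟩ := exists_injective_of_card_le_biUnion_card_add t _ hall
  have hcard_B : Fintype.card B ≤ G.cliqueNum := by
    simpa using card_add_card_le_cliqueNum hB hBc ∅ univ (by simp)
  have hf_nonadj {a : W} (ha : a ∉ B) {b : W} (hb : b ∈ B) (hab : G.Adj a b) :
      f ⟨a, ha⟩ ≠ .inl ⟨b, hb⟩ := fun h => by simpa [t, hab] using hft _ _ h
  let C : G.Coloring (B ⊕ Fin (G.cliqueNum - Fintype.card B)) :=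
    Coloring.mk (fun w => if h : w ∈ B then .inl ⟨w, h⟩ else f ⟨w, h⟩) fun {u v} huv => by
      by_cases hu : u ∈ B <;> by_cases hv : v ∈ B <;> simp only [hu, hv, dite_true, dite_false]
      · simpa using huv.ne
      · exact (hf_nonadj hv hu huv.symm).symm
      · exact hf_nonadj hu hv huv
      · exact hf.ne (by simpa using huv.ne)
  have := C.colorable
  rwa [Fintype.card_sum, Fintype.card_fin, Nat.add_sub_cancel' hcard_B] at this

theorem chromaticNumber_eq_cliqueNum_of_isBipartite_compl [Finite W] (h : Gᶜ.IsBipartite) :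
    G.chromaticNumber = G.cliqueNum := by
  have := Fintype.ofFinite W
  obtain ⟨C⟩ := h
  have hadj {u v : W} (huv : u ≠ v) (hC : C u = C v) : G.Adj u v := by
    by_contra hnadj
    exact C.valid ((compl_adj G u v).mpr ⟨huv, hnadj⟩) hC
  refine le_antisymm (Colorable.chromaticNumber_le ?_) cliqueNum_le_chromaticNumber
  refine colorable_cliqueNum_of_isClique_of_isClique_compl (B := {v | C v = 0}) ?_ ?_
  · exact fun u hu v hv huv => hadj huv (hu.trans hv.symm)
  · refine fun u hu v hv huv => hadj huv ?_
    simp only [Set.mem_compl_iff, Set.mem_ofPred_eq] at hu hv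
    omega

theorem isPerfect_of_isBipartite_compl {V : Type} [Finite V] {G : SimpleGraph V}
    (h : Gᶜ.IsBipartite) : IsPerfect G := fun _ =>
  chromaticNumber_eq_cliqueNum_of_isBipartite_compl <| by
    rw [compl_induce]
    exact h.of_hom (Embedding.induce _).toHom

end SimpleGraph

namespace IsHyperantiholePartition

variable {V : Type} {G : SimpleGraph V} {k : ℕ} {X : ZMod k → Set V}

noncomputable def part (hX : IsHyperantiholePartition G k X) (v : V) : ZMod k :=
  (hX.2.1 v).exists.choose

theorem mem_part (hX : IsHyperantiholePartition G k X) (v : V) : v ∈ X (hX.part v) :=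
  (hX.2.1 v).exists.choose_spec

theorem eq_part_of_mem (hX : IsHyperantiholePartition G k X) {v : V} {i : ZMod k}
    (hv : v ∈ X i) : i = hX.part v :=
  (hX.2.1 v).unique hv (hX.mem_part v)

theorem part_eq_add_one_or_of_compl_adj (hX : IsHyperantiholePartition G k X) {u v : V}
    (huv : Gᶜ.Adj u v) : hX.part u = hX.part v + 1 ∨ hX.part v = hX.part u + 1 := by
  by_contra! h
  refine ((compl_adj G u v).mp huv).2 ?_
  by_cases hp : hX.part u = hX.part v
  · exact hX.2.2.1 (hX.part v) (hp ▸ hX.mem_part u) (hX.mem_part v) huv.ne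
  · refine (hX.2.2.2.1 _ v (hX.mem_part v) u ?_).symm
    rintro ((hu | hu) | hu) <;> have := hX.eq_part_of_mem hu
    · exact h.2 (by rw [← this, sub_add_cancel])
    · exact hp this.symm
    · exact h.1 this.symm

theorem isBipartite_compl (hX : IsHyperantiholePartition G k X) (hk : Even k) :
    Gᶜ.IsBipartite := by
  let c : ZMod k →+* ZMod 2 := ZMod.castHom (even_iff_two_dvd.mp hk) (ZMod 2)
  let C : Gᶜ.Coloring (ZMod 2) := Coloring.mk (fun v => c (hX.part v)) fun huv => by
    rcases hX.part_eq_add_one_or_of_compl_adj huv with h | h <;> simp [h]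
  simpa using C.colorable

theorem isBipartite_compl_induce_compl [NeZero k] (hX : IsHyperantiholePartition G k X)
    (i : ZMod k) : (G.induce (X i)ᶜ)ᶜ.IsBipartite := by
  have key {u v : V} (hu : u ∉ X i) (h : hX.part u = hX.part v + 1) :
      ((hX.part u - i).val : ZMod 2) ≠ ((hX.part v - i).val : ZMod 2) := by
    have hui : hX.part u - i = hX.part v - i + 1 := by rw [h]; ring
    have hne : hX.part v - i + 1 ≠ 0 := by
      rw [← hui, sub_ne_zero]
      exact fun hpu => hu (hpu ▸ hX.mem_part u)
    simp [hui, ZMod.val_add_one_of_add_one_ne_zero hne]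
  rw [compl_induce]
  let C : (Gᶜ.induce (X i)ᶜ).Coloring (ZMod 2) :=
    Coloring.mk (fun v => ((hX.part v - i).val : ZMod 2)) fun {u v} huv => by
      rcases hX.part_eq_add_one_or_of_compl_adj huv with h | h
      · exact key u.2 h
      · exact (key v.2 h).symm
  simpa using C.colorable

end IsHyperantiholePartition

/-- If `A` is a `k`-hyperantihole (`k ≥ 4`) with hyperantihole partition `X`,
then `A \ X_i` is perfect for every `i`; moreover, if `k` is even then `A` itself
is perfect. -/
theorem hyperantihole_minus_part_perfect {V : Type} [Fintype V]
    (k : ℕ) (hk : 4 ≤ k) (A : SimpleGraph V)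
    (X : ZMod k → Set V) (hX : IsHyperantiholePartition A k X) :
    (∀ i : ZMod k, IsPerfect (A.induce (X i)ᶜ)) ∧ (Even k → IsPerfect A) := by
  have : NeZero k := ⟨by omega⟩
  exact ⟨fun i => isPerfect_of_isBipartite_compl (hX.isBipartite_compl_induce_compl i),
    fun hkeven => isPerfect_of_isBipartite_compl (hX.isBipartite_compl hkeven)⟩
end

section
/- Let k ≥ 5 be an odd integer. Then for every integer n ≥ (k−1)/2 there exists a k-hyperantihole A with ω(A) = n and χ(A) = g_k(n). -/
/-
Write `k = 2q + 1` and `n = qa + s` with `s < q`, and deal the vertices `0, …, M - 1`,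
`M = ka + 2s`, round-robin into the parts `ZMod k`; the parts `0, …, 2s - 1` get `a + 1`
vertices, the others `a`. The parts met by a clique form a stable set `J` of the cycle `C_k`;
as `J` and `J + 1` are disjoint, `|J| ≤ q`, and at most `s` parts of `J` are large, so
`ω = qa + s`, attained by the parts `0, 2, …, 2q - 2`. Since `k ≠ 3`, a stable set has at most
two vertices, so `χ ≥ ⌈M/2⌉`, and colouring `2t` and `2t + 1` alike attains it. Finally
`⌈M/2⌉ = g_k(n)`.
-/

open SimpleGraph

open Finset

def hyperantiholeOf {V : Type*} {k : ℕ} (p : V → ZMod k) : SimpleGraph V where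
  Adj u v := u ≠ v ∧ p v ≠ p u + 1 ∧ p u ≠ p v + 1
  symm := ⟨fun _ _ h => ⟨h.1.symm, h.2.2, h.2.1⟩⟩
  loopless := ⟨fun _ h => h.1 rfl⟩

section hyperantiholeOf

variable {V : Type*} {k : ℕ} {p : V → ZMod k}

@[simp]
lemma hyperantiholeOf_adj {u v : V} :
    (hyperantiholeOf p).Adj u v ↔ u ≠ v ∧ p v ≠ p u + 1 ∧ p u ≠ p v + 1 :=
  Iff.rfl

lemma not_adj_hyperantiholeOf {u v : V} (huv : u ≠ v) (h : ¬ (hyperantiholeOf p).Adj u v) :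
    p v = p u + 1 ∨ p u = p v + 1 := by
  by_contra! h'
  exact h (hyperantiholeOf_adj.2 ⟨huv, h'⟩)

theorem isHyperantiholePartition_hyperantiholeOf {V : Type} {p : V → ZMod k}
    [Nontrivial (ZMod k)] (hp : Function.Surjective p) :
    IsHyperantiholePartition (hyperantiholeOf p) k (fun i => p ⁻¹' {i}) := by
  refine ⟨fun i => hp.nonempty_preimage.2 (Set.singleton_nonempty i),
    fun v => ⟨p v, rfl, fun i hi => hi.symm⟩, ?_, ?_, ?_⟩
  · intro i u hu v hv huv
    simp only [Set.mem_preimage, Set.mem_singleton_iff] at hu hv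
    simp [huv, hu, hv]
  · intro i x hx y hy
    simp only [Set.mem_preimage, Set.mem_singleton_iff, Set.mem_union, not_or] at hx hy
    obtain ⟨⟨hy₁, hy₂⟩, hy₃⟩ := hy
    refine hyperantiholeOf_adj.2
      ⟨fun h => hy₂ (h ▸ hx), fun h => hy₃ (h.trans (by rw [hx])), fun h => hy₁ ?_⟩
    rw [← hx, h]; ring
  · intro i x hx y hy hxy
    simp only [Set.mem_preimage, Set.mem_singleton_iff, Set.mem_union] at hx hy
    rw [hyperantiholeOf_adj] at hxy
    rcases hy with hy | hy
    · exact hxy.2.2 (by rw [hx, hy]; ring)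
    · exact hxy.2.1 (by rw [hx, hy])

/-- Non-adjacent vertices have labels differing by `±1`, and three such differences cannot sum
to `0` unless `k ∣ 3`. -/
lemma card_le_two_of_isIndepSet (h3 : (3 : ZMod k) ≠ 0) {s : Finset V}
    (hs : (hyperantiholeOf p).IsIndepSet s) : #s ≤ 2 := by
  by_contra! h
  obtain ⟨x, hx, y, hy, z, hz, hxy, hxz, hyz⟩ := two_lt_card.1 h
  have hxy' := not_adj_hyperantiholeOf hxy (hs hx hy hxy)
  have hyz' := not_adj_hyperantiholeOf hyz (hs hy hz hyz)
  have hxz' := not_adj_hyperantiholeOf hxz (hs hx hz hxz)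
  rcases hxy' with h₁ | h₁ <;> rcases hyz' with h₂ | h₂ <;> rcases hxz' with h₃ | h₃ <;>
    grind

lemma card_le_two_mul_of_colorable [Fintype V] (h3 : (3 : ZMod k) ≠ 0) {m : ℕ}
    (hc : (hyperantiholeOf p).Colorable m) : Fintype.card V ≤ 2 * m := by
  classical
  obtain ⟨C⟩ := hc
  simpa using card_le_mul_card_image_of_maps_to (f := C) (s := univ) (t := univ)
    (fun _ _ => mem_univ _) 2 fun c _ =>
      card_le_two_of_isIndepSet h3 (by simpa [Coloring.colorClass] using C.isIndepSet_colorClass c)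

lemma disjoint_image_add_one_of_isClique [Nontrivial (ZMod k)] {s : Finset V}
    (hs : (hyperantiholeOf p).IsClique s) :
    Disjoint (s.image p) ((s.image p).image (· + 1)) := by
  simp only [Finset.disjoint_left, mem_image]
  rintro _ ⟨v, hv, rfl⟩ ⟨_, ⟨u, hu, rfl⟩, huv⟩
  obtain rfl | hne := eq_or_ne u v
  · simp at huv
  · exact (hyperantiholeOf_adj.1 (hs hu hv hne)).2.1 huv.symm

lemma isClique_preimage {E : Set (ZMod k)} (hE : ∀ i ∈ E, i + 1 ∉ E) :
    (hyperantiholeOf p).IsClique (p ⁻¹' E) := by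
  intro u hu v hv huv
  exact hyperantiholeOf_adj.2 ⟨huv, fun h => hE _ hu (h ▸ hv), fun h => hE _ hv (h ▸ hu)⟩

end hyperantiholeOf

lemma two_mul_card_le_of_disjoint_image {α : Type*} [DecidableEq α] {f : α → α}
    {s t : Finset α} (hf : Set.InjOn f s) (hdisj : Disjoint s (s.image f)) (hs : s ⊆ t)
    (hfs : s.image f ⊆ t) : 2 * #s ≤ #t := by
  have := card_le_card (union_subset hs hfs)
  rw [card_union_of_disjoint hdisj, card_image_of_injOn hf] at this
  omega

def cyclicHyperantihole (k M : ℕ) : SimpleGraph (Fin M) :=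
  hyperantiholeOf fun v : Fin M => ((v : ℕ) : ZMod k)

lemma card_filter_natCast_eq (k a r : ℕ) [NeZero k] (hr : r < k) (i : ZMod k) :
    #{v : Fin (k * a + r) | ((v : ℕ) : ZMod k) = i} = a + if i.val < r then 1 else 0 := by
  have hcount := Nat.count_modEq_card (k * a + r) (Nat.pos_of_neZero k) i.val
  rw [Nat.count_eq_card_filter_range, ← Nat.Iio_eq_range, ← Fin.map_valEmbedding_univ,
    filter_map, card_map, Nat.mul_add_div (Nat.pos_of_neZero k), Nat.div_eq_of_lt hr, add_zero,
    Nat.mul_add_mod, Nat.mod_eq_of_lt hr, Nat.mod_eq_of_lt (ZMod.val_lt i)] at hcount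
  rw [← hcount]
  congr! 2 with v
  simp [← ZMod.natCast_eq_natCast_iff]

lemma isHyperantihole_cyclicHyperantihole {k M : ℕ} (hk : 1 < k) (hkM : k ≤ M) :
    IsHyperantihole (cyclicHyperantihole k M) k := by
  have : Fact (1 < k) := ⟨hk⟩
  refine ⟨_, isHyperantiholePartition_hyperantiholeOf fun i => ?_⟩
  exact ⟨⟨i.val, (ZMod.val_lt i).trans_le hkM⟩, ZMod.natCast_zmod_val i⟩

/-- Colour `2t` and `2t + 1` alike: they lie in consecutive parts. -/
lemma colorable_cyclicHyperantihole (k M : ℕ) :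
    (cyclicHyperantihole k M).Colorable ((M + 1) / 2) := by
  refine ⟨Coloring.mk (fun v => ⟨v / 2, by omega⟩) fun {u v} huv hcol => ?_⟩
  rw [cyclicHyperantihole, hyperantiholeOf_adj] at huv
  have hne : (u : ℕ) ≠ v := Fin.val_ne_of_ne huv.1
  have hcol : (u : ℕ) / 2 = v / 2 := Fin.mk.inj_iff.1 hcol
  obtain h | h : (v : ℕ) = u + 1 ∨ (u : ℕ) = v + 1 := by omega
  · exact huv.2.1 (by rw [h, Nat.cast_succ])
  · exact huv.2.2 (by rw [h, Nat.cast_succ])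

lemma chromaticNumber_cyclicHyperantihole {k : ℕ} (h3 : (3 : ZMod k) ≠ 0) (M : ℕ) :
    (cyclicHyperantihole k M).chromaticNumber = ((M + 1) / 2 : ℕ) := by
  refine le_antisymm (colorable_cyclicHyperantihole k M).chromaticNumber_le
    (le_chromaticNumber_iff_colorable.2 fun m hm => ?_)
  have := card_le_two_mul_of_colorable h3 hm
  rw [Fintype.card_fin] at this
  exact_mod_cast (by omega : (M + 1) / 2 ≤ m)

section cliqueNum

variable {q a s : ℕ}

local notation "K" => 2 * q + 1
local notation "Γ" => cyclicHyperantihole K (K * a + 2 * s)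

lemma card_le_of_isClique_cyclicHyperantihole (hs : s < q) {W : Finset (Fin (K * a + 2 * s))}
    (hW : (Γ).IsClique W) : #W ≤ q * a + s := by
  have : Fact (1 < K) := ⟨by omega⟩
  set p : Fin (K * a + 2 * s) → ZMod K := fun v => ((v : ℕ) : ZMod K)
  set J := W.image p
  have hJ : Disjoint J (J.image (· + 1)) := disjoint_image_add_one_of_isClique hW
  have hJq : #J ≤ q := by
    have := two_mul_card_le_of_disjoint_image (add_left_injective 1).injOn hJ
      (subset_univ _) (subset_univ _)
    rw [card_univ, ZMod.card] at this
    omega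
  have hJs : #{i ∈ J | i.val < 2 * s} ≤ s := by
    set H := {i ∈ J | i.val < 2 * s}.image ZMod.val
    have hH : Disjoint H (H.image (· + 1)) := by
      simp only [H, Finset.disjoint_left, mem_image, mem_filter]
      rintro _ ⟨j, ⟨hj, -⟩, rfl⟩ ⟨_, ⟨i, ⟨hi, hi2s⟩, rfl⟩, hij⟩
      refine Finset.disjoint_left.1 hJ hj (mem_image.2 ⟨i, hi, ?_⟩)
      rw [← ZMod.natCast_zmod_val j, ← hij, Nat.cast_succ, ZMod.natCast_zmod_val]
    have := two_mul_card_le_of_disjoint_image (add_left_injective 1).injOn hH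
      (t := range (2 * s + 1)) (by intro x; simp [H]; omega) (by intro x; simp [H]; omega)
    rw [card_range, card_image_of_injective _ (ZMod.val_injective K)] at this
    omega
  calc #W = ∑ i ∈ J, #{v ∈ W | p v = i} := card_eq_sum_card_image p W
    _ ≤ ∑ i ∈ J, (a + if i.val < 2 * s then 1 else 0) := by
      refine sum_le_sum fun i _ => ?_
      rw [← card_filter_natCast_eq K a (2 * s) (by omega) i]
      exact card_le_card (filter_subset_filter _ (subset_univ W))
    _ = #J * a + #{i ∈ J | i.val < 2 * s} := by
      rw [sum_add_distrib, sum_const, smul_eq_mul, sum_boole, Nat.cast_id]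
    _ ≤ q * a + s := by gcongr

lemma exists_isNClique_cyclicHyperantihole (hs : s < q) :
    ∃ W, (Γ).IsNClique (q * a + s) W := by
  have : Fact (1 < K) := ⟨by omega⟩
  set E := (range q).image fun j => ((2 * j : ℕ) : ZMod K)
  have hE : ∀ i ∈ (E : Set (ZMod K)), i + 1 ∉ (E : Set (ZMod K)) := by
    simp only [E, coe_image, coe_range, Set.mem_image, Set.mem_Iio]
    rintro _ ⟨i, hi, rfl⟩ ⟨j, hj, hij⟩
    have := congrArg ZMod.val hij
    rw [← Nat.cast_succ, ZMod.val_cast_of_lt (by omega), ZMod.val_cast_of_lt (by omega)] at this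
    omega
  refine ⟨({v | ((v : ℕ) : ZMod K) ∈ E} : Finset (Fin (K * a + 2 * s))), ?_, ?_⟩
  · simpa [cyclicHyperantihole, Set.preimage] using isClique_preimage hE
  · calc _ = ∑ i ∈ E, #{v : Fin (K * a + 2 * s) | ((v : ℕ) : ZMod K) = i} := by
          refine (card_eq_sum_card_fiberwise
            (f := fun v : Fin (K * a + 2 * s) => ((v : ℕ) : ZMod K)) fun v hv => by simpa using hv
            ).trans (sum_congr rfl fun i hi => ?_)
          simp only [filter_filter]
          congr! 2 with v
          exact and_iff_right_of_imp fun h => h ▸ hi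
      _ = ∑ j ∈ range q, (a + if 2 * j < 2 * s then 1 else 0) := by
          rw [sum_image]
          · refine sum_congr rfl fun j hj => ?_
            rw [card_filter_natCast_eq K a (2 * s) (by omega),
              ZMod.val_cast_of_lt (by simp at hj; omega)]
          · intro i hi j hj hij
            have := congrArg ZMod.val hij
            simp only [coe_range, Set.mem_Iio] at hi hj
            rw [ZMod.val_cast_of_lt (by omega), ZMod.val_cast_of_lt (by omega)] at this
            omega
      _ = q * a + s := by
          rw [sum_add_distrib, sum_const, card_range, smul_eq_mul, sum_boole, Nat.cast_id,
            show {j ∈ range q | 2 * j < 2 * s} = range s by ext; simp; omega, card_range]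

lemma cliqueNum_cyclicHyperantihole (hs : s < q) : (Γ).cliqueNum = q * a + s := by
  obtain ⟨W, hW⟩ := exists_isNClique_cyclicHyperantihole (a := a) hs
  obtain ⟨W', hW'⟩ := (Γ).exists_isNClique_cliqueNum
  refine le_antisymm ?_ ?_
  · exact hW'.card_eq ▸ card_le_of_isClique_cyclicHyperantihole hs hW'.isClique
  · exact hW.card_eq ▸ hW.isClique.card_le_cliqueNum

end cliqueNum

lemma ringG_two_mul_add_one {q a s : ℕ} (hs : s < q) :
    ringG (2 * q + 1) (q * a + s) = ((2 * q + 1) * a + 2 * s + 1) / 2 := by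
  have hq : 0 < 2 * q := by omega
  rw [ringG, show 2 * q + 1 - 1 = 2 * q by omega, show (2 * q + 1 - 3) / 2 = q - 1 by omega]
  rcases Nat.even_or_odd' a with ⟨b, rfl | rfl⟩
  · have hn : q * (2 * b) + s = s + 2 * q * b := by ring
    have hkn : (2 * q + 1) * (s + 2 * q * b) = s + 2 * q * (s + (2 * q + 1) * b) := by ring
    rw [hn, Nat.add_mul_mod_self_left, Nat.mod_eq_of_lt (by omega), if_pos (by omega), hkn,
      Nat.add_mul_div_left _ _ hq, Nat.div_eq_of_lt (by omega),
      show (2 * q + 1) * (2 * b) = 2 * ((2 * q + 1) * b) by ring]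
    omega
  · have hn : q * (2 * b + 1) + s = q + s + 2 * q * b := by ring
    have hkn : (2 * q + 1) * (q + s + 2 * q * b) + (2 * q + 1 - 2)
        = (q + s - 1) + 2 * q * (q + s + (2 * q + 1) * b + 1) := by
      zify [show 1 ≤ q + s by omega, show 2 ≤ 2 * q + 1 by omega]
      ring
    rw [hn, Nat.add_mul_mod_self_left, Nat.mod_eq_of_lt (by omega), if_neg (by omega), hkn,
      Nat.add_mul_div_left _ _ hq, Nat.div_eq_of_lt (by omega),
      show (2 * q + 1) * (2 * b + 1) = 2 * ((2 * q + 1) * b) + 2 * q + 1 by ring]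
    omega

/-- For odd `k ≥ 5` and every `n ≥ (k-1)/2`, there is a `k`-hyperantihole `A`
with `ω(A) = n` and `χ(A) = g_k(n)`. -/
theorem exists_hyperantihole_chi_eq_ringG
    (k : ℕ) (hk : 5 ≤ k) (hko : Odd k) (n : ℕ) (hn : (k - 1) / 2 ≤ n) :
    ∃ (m : ℕ) (A : SimpleGraph (Fin m)), IsHyperantihole A k ∧
      A.cliqueNum = n ∧ A.chromaticNumber = (ringG k n : ℕ∞) := by
  obtain ⟨q, rfl⟩ := hko
  have hq : 0 < q := by omega
  have hs : n % q < q := Nat.mod_lt n hq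
  have h3 : ((3 : ℕ) : ZMod (2 * q + 1)) ≠ 0 := by
    rw [Ne, ZMod.natCast_eq_zero_iff]
    exact fun h => by have := Nat.le_of_dvd (by norm_num) h; omega
  refine ⟨_, cyclicHyperantihole (2 * q + 1) ((2 * q + 1) * (n / q) + 2 * (n % q)),
    isHyperantihole_cyclicHyperantihole (by omega) ?_, ?_, ?_⟩
  · have ha : 0 < n / q := Nat.div_pos (by omega) hq
    exact (Nat.le_mul_of_pos_right _ ha).trans (Nat.le_add_right _ _)
  · rw [cliqueNum_cyclicHyperantihole hs, Nat.div_add_mod]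
  · rw [chromaticNumber_cyclicHyperantihole (mod_cast h3), ← ringG_two_mul_add_one hs,
      Nat.div_add_mod]
end

section
/- Every hyperhole H contains the complete graph K_{χ(H)} as a minor; that is, there exist χ(H) pairwise disjoint nonempty subsets S_1, …, S_{χ(H)} of V(H), each inducing a connected subgraph, such that for all distinct i, j there is at least one edge of H between S_i and S_j. -/
open SimpleGraph

open Finset in
lemma distribute {α : Type} [DecidableEq α] (s : Finset α) (c : α → ℕ) : ∀ D : ℕ, D ≤ ∑ a ∈ s, c a →
    ∃ e : α → ℕ, (∀ a ∈ s, e a ≤ c a) ∧ ∑ a ∈ s, e a = D := by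
  classical
  induction s using Finset.induction with
  | empty =>
    intro D hD
    simp only [Finset.sum_empty, Nat.le_zero] at hD
    exact ⟨fun _ => 0, by simp, by simp [hD]⟩
  | @insert a s ha ih =>
    intro D hD
    rw [Finset.sum_insert ha] at hD
    obtain ⟨e, he1, he2⟩ := ih (D - min (c a) D) (by omega)
    refine ⟨fun x => if x = a then min (c a) D else e x, ?_, ?_⟩
    · intro b hb
      rcases Finset.mem_insert.mp hb with rfl | hb
      · simp
      · have hne : b ≠ a := fun h => ha (h ▸ hb)
        simpa [hne] using he1 b hb
    · rw [Finset.sum_insert ha, if_pos rfl]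
      have : ∑ x ∈ s, (if x = a then min (c a) D else e x) = ∑ x ∈ s, e x :=
        Finset.sum_congr rfl (fun x hx => if_neg (fun (h : x = a) => ha (h ▸ hx)))
      rw [this, he2]
      omega

lemma induce_range_connected {V : Type} (G : SimpleGraph V) (n : ℕ) (hn : 0 < n)
    (f : Fin n → V)
    (hadj : ∀ j : ℕ, ∀ h : j + 1 < n, G.Adj (f ⟨j, by omega⟩) (f ⟨j + 1, h⟩)) :
    (G.induce (Set.range f)).Connected := by
  have h0 : f ⟨0, hn⟩ ∈ Set.range f := ⟨_, rfl⟩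
  rw [SimpleGraph.connected_iff]
  constructor
  · have key : ∀ j : ℕ, ∀ h : j < n,
        (G.induce (Set.range f)).Reachable ⟨f ⟨0, hn⟩, h0⟩ ⟨f ⟨j, h⟩, ⟨_, rfl⟩⟩ := by
      intro j
      induction j with
      | zero => intro h; exact SimpleGraph.Reachable.refl _
      | succ j ihj =>
        intro h
        refine (ihj (by omega)).trans (SimpleGraph.Adj.reachable ?_)
        exact hadj j h
    rintro ⟨x, jx, rfl⟩ ⟨y, jy, rfl⟩
    have h1 := key jx.1 jx.2
    have h2 := key jy.1 jy.2
    simp only [Fin.eta] at h1 h2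
    exact h1.symm.trans h2
  · exact ⟨⟨_, h0⟩⟩

lemma induce_singleton_connected {V : Type} (G : SimpleGraph V) (v : V) :
    (G.induce {v}).Connected := by
  rw [SimpleGraph.connected_iff]
  refine ⟨?_, ⟨⟨v, rfl⟩⟩⟩
  rintro ⟨a, ha⟩ ⟨b, hb⟩
  have : a = b := by
    simp only [Set.mem_singleton_iff] at ha hb; rw [ha, hb]
  subst this
  exact SimpleGraph.Reachable.refl _

lemma hasCompleteMinor_of_family {V : Type} (G : SimpleGraph V) (m : ℕ) {ι : Type} [Fintype ι]
    (hcard : Fintype.card ι = m) (S : ι → Set V)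
    (h1 : ∀ i, (S i).Nonempty) (h2 : ∀ i j, i ≠ j → Disjoint (S i) (S j))
    (h3 : ∀ i, (G.induce (S i)).Connected)
    (h4 : ∀ i j, i ≠ j → ∃ x ∈ S i, ∃ y ∈ S j, G.Adj x y) :
    HasCompleteMinor G m := by
  let e : ι ≃ Fin m := Fintype.equivFinOfCardEq hcard
  refine ⟨S ∘ e.symm, fun i => h1 _, fun i j hij => h2 _ _ (fun h => hij (by
    simpa using congrArg e h)), fun i => h3 _, fun i j hij => h4 _ _ (fun h => hij (by
    simpa using congrArg e h))⟩

lemma hasCompleteMinor_mono {V : Type} (G : SimpleGraph V) {m n : ℕ}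
    (h : HasCompleteMinor G m) (hnm : n ≤ m) : HasCompleteMinor G n := by
  obtain ⟨S, h1, h2, h3, h4⟩ := h
  exact ⟨S ∘ Fin.castLE hnm, fun i => h1 _,
    fun i j hij => h2 _ _ ((Fin.castLE_injective hnm).ne hij), fun i => h3 _,
    fun i j hij => h4 _ _ ((Fin.castLE_injective hnm).ne hij)⟩

lemma sum_Ico_pairs (q : ℕ) (f : ℕ → ℕ) :
    ∑ d ∈ Finset.Ico 1 (2 * q + 1), f d = ∑ r ∈ Finset.range q, (f (2 * r + 1) + f (2 * r + 2)) := by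
  induction q with
  | zero => simp
  | succ q ih =>
    have h1 : (1 : ℕ) ≤ 2 * q + 1 := by omega
    have e : 2 * (q + 1) + 1 = (2 * q + 1) + 1 + 1 := by ring
    rw [e, Finset.sum_Ico_succ_top (by omega), Finset.sum_Ico_succ_top h1, ih,
      Finset.sum_range_succ]
    omega

lemma zmod_sum_reindex (k : ℕ) [NeZero k] (w : ZMod k → ℕ) (i : ZMod k) :
    ∑ j : ZMod k, w j = ∑ d ∈ Finset.range k, w (i + (d : ZMod k)) := by
  refine Finset.sum_nbij' (fun j => (j - i).val) (fun d => i + (d : ZMod k)) ?_ ?_ ?_ ?_ ?_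
  · intro j _; exact Finset.mem_range.mpr (ZMod.val_lt _)
  · intro d _; exact Finset.mem_univ _
  · intro j _
    show i + ((j - i).val : ZMod k) = j
    rw [ZMod.natCast_rightInverse (j - i)]
    ring
  · intro d hd
    show (i + (d : ZMod k) - i).val = d
    rw [add_sub_cancel_left, ZMod.val_natCast_of_lt (Finset.mem_range.mp hd)]
  · intro j _
    show w j = w (i + ((j - i).val : ZMod k))
    rw [ZMod.natCast_rightInverse (j - i)]
    ring_nf

lemma pair_sum_bound (k : ℕ) (hk : 4 ≤ k) (w : ZMod k → ℕ) (c : ZMod k)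
    (hc : ∀ i, w i + w (i + 1) ≤ w c + w (c + 1)) (i : ZMod k) :
    haveI : NeZero k := ⟨by omega⟩
    ∑ j : ZMod k, w j ≤ w i + (k / 2) * (w c + w (c + 1)) := by
  haveI : NeZero k := ⟨by omega⟩
  set q := k / 2 with hq
  rw [zmod_sum_reindex k w i]
  have h1 : ∑ d ∈ Finset.range k, w (i + (d : ZMod k)) =
      w i + ∑ d ∈ Finset.Ico 1 k, w (i + (d : ZMod k)) := by
    rw [Finset.range_eq_Ico, ← Finset.sum_Ico_consecutive _ (by omega : (0:ℕ) ≤ 1) (by omega : (1:ℕ) ≤ k)]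
    simp
  rw [h1]
  have h2 : ∑ d ∈ Finset.Ico 1 k, w (i + (d : ZMod k)) ≤
      ∑ d ∈ Finset.Ico 1 (2 * q + 1), w (i + (d : ZMod k)) := by
    apply Finset.sum_le_sum_of_subset
    apply Finset.Ico_subset_Ico le_rfl
    omega
  have h3 : ∑ d ∈ Finset.Ico 1 (2 * q + 1), w (i + (d : ZMod k)) ≤ q * (w c + w (c + 1)) := by
    rw [sum_Ico_pairs]
    calc ∑ r ∈ Finset.range q, (w (i + ((2 * r + 1 : ℕ) : ZMod k)) + w (i + ((2 * r + 2 : ℕ) : ZMod k)))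
        ≤ ∑ _r ∈ Finset.range q, (w c + w (c + 1)) := by
          apply Finset.sum_le_sum
          intro r _
          have e : ((2 * r + 2 : ℕ) : ZMod k) = ((2 * r + 1 : ℕ) : ZMod k) + 1 := by push_cast; ring
          rw [e, ← add_assoc]
          exact hc _
      _ = q * (w c + w (c + 1)) := by rw [Finset.sum_const, Finset.card_range, smul_eq_mul]
  omega

lemma colorable_aux {V : Type} [Fintype V] (H : SimpleGraph V) (k : ℕ) [NeZero k] (hk : 4 ≤ k)
    (X : ZMod k → Set V) (hP : IsHyperholePartition H k X) (m : ℕ) (hm0 : 0 < m)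
    (hm : ∀ i, Nat.card (X i) + Nat.card (X (i + 1)) ≤ m)
    (hW : (∑ i : ZMod k, Nat.card (X i)) ≤ (k / 2) * m) :
    H.Colorable m := by
  classical
  obtain ⟨hne, huniq, hclique, hcompl, hanti⟩ := hP
  set q := k / 2 with hq
  set w : ZMod k → ℕ := fun i => Nat.card (X i) with hwdef
  set W := ∑ i : ZMod k, w i with hWdef
  -- the clique index of each vertex
  have hidx0 : ∀ v : V, ∃ i, v ∈ X i := fun v => (huniq v).exists
  choose idx hmem using hidx0
  have huniq' : ∀ v i, v ∈ X i → idx v = i := by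
    intro v i hi
    obtain ⟨j, _, hj⟩ := huniq v
    exact (hj _ (hmem v)).trans (hj i hi).symm
  -- the rank of each vertex within its clique
  set rank : V → ℕ := fun v => ((Finite.equivFin (X (idx v))) ⟨v, hmem v⟩ : Fin _).val
    with hrankdef
  have hrank_lt : ∀ v, rank v < w (idx v) := fun v => Fin.is_lt _
  have hcongr : ∀ (i j : ZMod k) (h : i = j) (v : V) (hv : v ∈ X i),
      ((Finite.equivFin (X i)) ⟨v, hv⟩ : Fin _).val
        = ((Finite.equivFin (X j)) ⟨v, h ▸ hv⟩ : Fin _).val := by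
    intro i j h v hv; subst h; rfl
  have hrank_inj : ∀ u v : V, idx u = idx v → rank u = rank v → u = v := by
    intro u v h hr
    have hv' : v ∈ X (idx u) := h ▸ hmem v
    have hr' : ((Finite.equivFin (X (idx u))) ⟨u, hmem u⟩ : Fin _).val
        = ((Finite.equivFin (X (idx v))) ⟨v, hmem v⟩ : Fin _).val := hr
    have h2 : ((Finite.equivFin (X (idx v))) ⟨v, hmem v⟩ : Fin _).val
        = ((Finite.equivFin (X (idx u))) ⟨v, hv'⟩ : Fin _).val :=
      hcongr (idx v) (idx u) h.symm v (hmem v)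
    rw [h2] at hr'
    exact congrArg Subtype.val ((Finite.equivFin (X (idx u))).injective (Fin.val_injective hr'))
  -- distribute the slack
  set csum : ZMod k → ℕ := fun i => m - (w i + w (i + 1)) with hcsumdef
  have hshift : ∑ i : ZMod k, w (i + 1) = W :=
    Fintype.sum_equiv (Equiv.addRight (1 : ZMod k)) _ _ (fun i => rfl)
  have hcards : Fintype.card (ZMod k) = k := ZMod.card k
  have hcsum : (∑ i : ZMod k, csum i) + 2 * W = k * m := by
    have hterm : ∀ i : ZMod k, csum i + (w i + w (i + 1)) = m := by
      intro i
      have h1 : w i + w (i + 1) ≤ m := hm i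
      show m - (w i + w (i + 1)) + (w i + w (i + 1)) = m
      omega
    calc (∑ i : ZMod k, csum i) + 2 * W
        = ∑ i : ZMod k, (csum i + (w i + w (i + 1))) := by
          rw [Finset.sum_add_distrib, Finset.sum_add_distrib, hshift, ← hWdef]
          omega
      _ = ∑ _i : ZMod k, m := Finset.sum_congr rfl (fun i _ => hterm i)
      _ = k * m := by rw [Finset.sum_const, Finset.card_univ, hcards, smul_eq_mul]
  have h2q : 2 * (q * m) ≤ k * m := by
    have h1 : 2 * q ≤ k := by omega
    calc 2 * (q * m) = (2 * q) * m := by ring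
      _ ≤ k * m := Nat.mul_le_mul_right m h1
  have hWqm : W ≤ q * m := hW
  have hD : q * m - W ≤ ∑ i : ZMod k, csum i := by omega
  obtain ⟨e, he1, he2⟩ := distribute Finset.univ csum (q * m - W) hD
  set a : ZMod k → ℕ := fun i => w i + e i with hadef
  have ha1 : ∀ i, w i ≤ a i := fun i => Nat.le_add_right _ _
  have ha2 : ∀ i, a i + w (i + 1) ≤ m := by
    intro i
    have h1 : e i ≤ m - (w i + w (i + 1)) := he1 i (Finset.mem_univ i)
    have h2 : w i + w (i + 1) ≤ m := hm i
    show w i + e i + w (i + 1) ≤ m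
    omega
  have hasum : ∑ i : ZMod k, a i = q * m := by
    show ∑ i : ZMod k, (w i + e i) = q * m
    rw [Finset.sum_add_distrib, he2, ← hWdef]
    omega
  -- partial sums
  set s' : ℕ → ℕ := fun d => ∑ r ∈ Finset.range d, a ((r : ℕ) : ZMod k) with hs'def
  set s : ZMod k → ℕ := fun i => s' i.val with hsdef
  have hstep : ∀ i : ZMod k, s (i + 1) ≡ s i + a i [MOD m] := by
    intro i
    have hvi : i.val < k := ZMod.val_lt i
    have hcast : ((i.val : ℕ) : ZMod k) = i := ZMod.natCast_rightInverse i
    have hsucc : s i + a i = s' (i.val + 1) := by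
      show (∑ r ∈ Finset.range i.val, a ((r : ℕ) : ZMod k)) + a i
          = ∑ r ∈ Finset.range (i.val + 1), a ((r : ℕ) : ZMod k)
      rw [Finset.sum_range_succ, hcast]
    by_cases hlast : i.val + 1 = k
    · have h0 : i + 1 = 0 := by
        have : ((i.val + 1 : ℕ) : ZMod k) = 0 := by rw [hlast, ZMod.natCast_self]
        rw [← hcast, ← Nat.cast_one, ← Nat.cast_add, this]
      rw [h0]
      have hz : s (0 : ZMod k) = 0 := by
        show s' (0 : ZMod k).val = 0
        rw [ZMod.val_zero]
        simp [hs'def]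
      have htot : s i + a i = q * m := by
        rw [hsucc, hlast]
        have hre := zmod_sum_reindex k a 0
        simp only [zero_add] at hre
        show (∑ r ∈ Finset.range k, a ((r : ℕ) : ZMod k)) = q * m
        rw [← hre, hasum]
      rw [hz, htot]
      exact (Nat.modEq_zero_iff_dvd.mpr ⟨q, mul_comm q m⟩).symm
    · have hv1 : (i + 1).val = i.val + 1 := by
        have h1 : i + 1 = ((i.val + 1 : ℕ) : ZMod k) := by
          rw [← hcast, ← Nat.cast_one, ← Nat.cast_add, hcast]
        rw [h1, ZMod.val_natCast_of_lt (by omega)]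
      have : s (i + 1) = s i + a i := by
        rw [hsucc]
        show s' (i + 1).val = s' (i.val + 1)
        rw [hv1]
      rw [this]
  have hwm : ∀ i, w i ≤ m := fun i => le_trans (Nat.le_add_right _ _) (hm i)
  -- the coloring
  set col : V → Fin m := fun v => ⟨(s (idx v) + rank v) % m, Nat.mod_lt _ hm0⟩ with hcoldef
  have cross : ∀ x y : V, idx y = idx x + 1 → col x ≠ col y := by
    intro x y hxy hcoleq
    have hrx : rank x < w (idx x) := hrank_lt x
    have hry : rank y < w (idx x + 1) := by rw [← hxy]; exact hrank_lt y
    have h1 : (s (idx x) + rank x) % m = (s (idx y) + rank y) % m := congrArg Fin.val hcoleq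
    rw [hxy] at h1
    have h1 : (s (idx x) + rank x) ≡ (s (idx x + 1) + rank y) [MOD m] := h1
    have h2 : (s (idx x + 1) + rank y) ≡ (s (idx x) + (a (idx x) + rank y)) [MOD m] := by
      have := (hstep (idx x)).add_right (rank y)
      rw [add_assoc] at this
      exact this
    have h3 := (h1.trans h2)
    have h4 := Nat.ModEq.add_left_cancel' (s (idx x)) h3
    have hb1 : rank x < m := lt_of_lt_of_le hrx (hwm _)
    have hb2 : a (idx x) + rank y < m := by
      have := ha2 (idx x)
      omega
    have h5 : rank x = a (idx x) + rank y := by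
      have := h4
      unfold Nat.ModEq at this
      rw [Nat.mod_eq_of_lt hb1, Nat.mod_eq_of_lt hb2] at this
      exact this
    have := ha1 (idx x)
    omega
  have same : ∀ x y : V, x ≠ y → idx y = idx x → col x ≠ col y := by
    intro x y hxne hxy hcoleq
    have h1 : (s (idx x) + rank x) % m = (s (idx y) + rank y) % m := congrArg Fin.val hcoleq
    rw [hxy] at h1
    have h1 : (s (idx x) + rank x) ≡ (s (idx x) + rank y) [MOD m] := h1
    have h4 := Nat.ModEq.add_left_cancel' (s (idx x)) h1
    have hb1 : rank x < m := lt_of_lt_of_le (hrank_lt x) (hwm _)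
    have hb2 : rank y < m := lt_of_lt_of_le (hrank_lt y) (hwm _)
    have h5 : rank x = rank y := by
      unfold Nat.ModEq at h4
      rw [Nat.mod_eq_of_lt hb1, Nat.mod_eq_of_lt hb2] at h4
      exact h4
    exact hxne (hrank_inj x y hxy.symm h5)
  have valid : ∀ {x y : V}, H.Adj x y → col x ≠ col y := by
    intro x y hadjxy
    have hxne : x ≠ y := H.ne_of_adj hadjxy
    have hyin : y ∈ X (idx x - 1) ∪ X (idx x) ∪ X (idx x + 1) := by
      by_contra hc
      exact hanti (idx x) x (hmem x) y hc hadjxy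
    rcases hyin with (hy | hy) | hy
    · have h1 : idx y = idx x - 1 := huniq' y _ hy
      have h2 : idx x = idx y + 1 := by rw [h1]; ring
      exact (cross y x h2).symm
    · exact same x y hxne (huniq' y _ hy)
    · exact cross x y (huniq' y _ hy)
  exact ⟨SimpleGraph.Coloring.mk col fun hadjxy => valid hadjxy⟩

lemma minor_aux {V : Type} [Fintype V] (H : SimpleGraph V) (k : ℕ) [NeZero k] (hk : 4 ≤ k)
    (X : ZMod k → Set V) (hP : IsHyperholePartition H k X) (c : ZMod k) (m : ℕ)
    (hm1 : Nat.card (X c) + Nat.card (X (c + 1)) ≤ m)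
    (hl : ∀ i, m - (Nat.card (X c) + Nat.card (X (c + 1))) ≤ Nat.card (X i)) :
    HasCompleteMinor H m := by
  classical
  haveI : Fact (1 < k) := ⟨by omega⟩
  obtain ⟨hne, huniq, hclique, hcompl, hanti⟩ := hP
  set L := m - (Nat.card (X c) + Nat.card (X (c + 1))) with hLdef
  -- choosing vertices in cliques
  set vert : (i : ZMod k) → Fin (Nat.card (X i)) → V :=
    fun i j => ((Finite.equivFin (X i)).symm j : V) with hvertdef
  have hvmem : ∀ i j, vert i j ∈ X i := fun i j => ((Finite.equivFin (X i)).symm j).2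
  have hvinj : ∀ i, Function.Injective (vert i) := by
    intro i j1 j2 h
    exact (Finite.equivFin (X i)).symm.injective (Subtype.val_injective h)
  have hdisj : ∀ {x : V} {i j : ZMod k}, x ∈ X i → x ∈ X j → i = j := by
    intro x i j hi hj
    obtain ⟨l, _, hl2⟩ := huniq x
    exact (hl2 i hi).trans (hl2 j hj).symm
  -- index arithmetic
  have hval2 : ∀ d : ℕ, d < k - 2 → ((2 + d : ℕ) : ZMod k).val = 2 + d := by
    intro d hd
    exact ZMod.val_natCast_of_lt (by omega)
  have hginj : ∀ d1 d2 : ℕ, d1 < k - 2 → d2 < k - 2 →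
      c + ((2 + d1 : ℕ) : ZMod k) = c + ((2 + d2 : ℕ) : ZMod k) → d1 = d2 := by
    intro d1 d2 h1 h2 h
    have h3 := add_left_cancel h
    have h4 := congrArg ZMod.val h3
    rw [hval2 d1 (by omega), hval2 d2 (by omega)] at h4
    omega
  have hgne0 : ∀ d : ℕ, d < k - 2 → c + ((2 + d : ℕ) : ZMod k) ≠ c := by
    intro d hd h
    have h2 : ((2 + d : ℕ) : ZMod k) = 0 := by
      have h1 : c + ((2 + d : ℕ) : ZMod k) = c + 0 := by rw [h, add_zero]
      exact add_left_cancel h1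
    have h3 := congrArg ZMod.val h2
    rw [hval2 d (by omega), ZMod.val_zero] at h3
    omega
  have hgne1 : ∀ d : ℕ, d < k - 2 → c + ((2 + d : ℕ) : ZMod k) ≠ c + 1 := by
    intro d hd h
    have h2 : ((2 + d : ℕ) : ZMod k) = 1 := add_left_cancel h
    have h3 := congrArg ZMod.val h2
    rw [hval2 d (by omega), ZMod.val_one] at h3
    omega
  have hglast : c + ((2 + (k - 3) : ℕ) : ZMod k) = c - 1 := by
    have h1 : (2 + (k - 3) : ℕ) = k - 1 := by omega
    rw [h1]
    have h2 : ((k - 1 : ℕ) : ZMod k) + 1 = 0 := by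
      have h3 : ((k - 1 : ℕ) : ZMod k) + ((1 : ℕ) : ZMod k) = ((k - 1 + 1 : ℕ) : ZMod k) :=
        (Nat.cast_add _ _).symm
      rw [Nat.cast_one] at h3
      have h4 : k - 1 + 1 = k := by omega
      rw [h3, h4, ZMod.natCast_self]
    have h4 : ((k - 1 : ℕ) : ZMod k) = -1 := eq_neg_of_add_eq_zero_left h2
    rw [h4]
    ring
  have hgsucc : ∀ d : ℕ, ((2 + (d + 1) : ℕ) : ZMod k) = ((2 + d : ℕ) : ZMod k) + 1 := by
    intro d
    push_cast
    ring
  -- the snakes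
  set snake : Fin L → Fin (k - 2) → V :=
    fun r d => vert (c + ((2 + (d : ℕ) : ℕ) : ZMod k)) (Fin.castLE (hl _) r) with hsnakedef
  have hsmem : ∀ (r : Fin L) (d : Fin (k - 2)),
      snake r d ∈ X (c + ((2 + (d : ℕ) : ℕ) : ZMod k)) := fun r d => hvmem _ _
  -- the family
  set F : ((Fin (Nat.card (X c)) ⊕ Fin (Nat.card (X (c + 1)))) ⊕ Fin L) → Set V :=
    Sum.elim (Sum.elim (fun j => {vert c j}) (fun j => {vert (c + 1) j}))
      (fun r => Set.range (snake r)) with hFdef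
  have hk2 : 0 < k - 2 := by omega
  have hcne : c ≠ c + 1 := by
    intro h
    have h1 : (1 : ZMod k) = 0 := by
      have := left_eq_add.mp h
      exact this
    exact one_ne_zero h1
  apply hasCompleteMinor_of_family H m (ι := (Fin (Nat.card (X c)) ⊕ Fin (Nat.card (X (c + 1)))) ⊕ Fin L) ?_ F ?_ ?_ ?_ ?_
  · -- cardinality
    have hm1' : Nat.card (X c) + Nat.card (X (c + 1)) ≤ m := hm1
    simp only [Fintype.card_sum, Fintype.card_fin]
    omega
  · -- nonempty
    rintro ((j | j) | r)
    · exact ⟨vert c j, rfl⟩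
    · exact ⟨vert (c + 1) j, rfl⟩
    · exact ⟨snake r ⟨0, hk2⟩, ⟨_, rfl⟩⟩
  · -- disjoint
    rintro ((j1 | j1) | r1) ((j2 | j2) | r2) hij <;>
      rw [Set.disjoint_left] <;> intro x hx1 hx2 <;>
      simp only [hFdef, Sum.elim_inl, Sum.elim_inr, Set.mem_singleton_iff] at hx1 hx2
    · subst hx1
      exact hij (by rw [hvinj c hx2.symm])
    · subst hx1
      exact hcne (hdisj (hvmem c j1) (hx2 ▸ hvmem (c + 1) j2))
    · subst hx1
      obtain ⟨d, hd⟩ := hx2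
      exact hgne0 d d.2 (hdisj (hd ▸ hsmem r2 d) (hvmem c j1))
    · subst hx1
      exact hcne (hdisj (hx2 ▸ hvmem c j2) (hvmem (c + 1) j1))
    · subst hx1
      exact hij (by rw [hvinj (c + 1) hx2.symm])
    · subst hx1
      obtain ⟨d, hd⟩ := hx2
      exact hgne1 d d.2 (hdisj (hd ▸ hsmem r2 d) (hvmem (c + 1) j1))
    · subst hx2
      obtain ⟨d, hd⟩ := hx1
      exact hgne0 d d.2 (hdisj (hd ▸ hsmem r1 d) (hvmem c j2))
    · subst hx2
      obtain ⟨d, hd⟩ := hx1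
      exact hgne1 d d.2 (hdisj (hd ▸ hsmem r1 d) (hvmem (c + 1) j2))
    · obtain ⟨d1, hd1⟩ := hx1
      obtain ⟨d2, hd2⟩ := hx2
      have hcl : c + ((2 + (d1 : ℕ) : ℕ) : ZMod k) = c + ((2 + (d2 : ℕ) : ℕ) : ZMod k) :=
        hdisj (hd1 ▸ hsmem r1 d1) (hd2 ▸ hsmem r2 d2)
      have hdd : (d1 : ℕ) = (d2 : ℕ) := hginj _ _ d1.2 d2.2 hcl
      have hdd' : d1 = d2 := Fin.ext hdd
      subst hdd'
      have : snake r1 d1 = snake r2 d1 := by rw [hd1, hd2]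
      have hr : Fin.castLE (hl _) r1 = Fin.castLE (hl _) r2 := hvinj _ this
      exact hij (by rw [Fin.castLE_injective _ hr])
  · -- connected
    rintro ((j | j) | r)
    · exact induce_singleton_connected H _
    · exact induce_singleton_connected H _
    · apply induce_range_connected H (k - 2) hk2 (snake r)
      intro d hd
      have h1 : snake r ⟨d, by omega⟩ ∈ X (c + ((2 + d : ℕ) : ZMod k)) :=
        hsmem r ⟨d, by omega⟩
      have h2 : snake r ⟨d + 1, hd⟩ ∈ X ((c + ((2 + d : ℕ) : ZMod k)) + 1) := by
        have h3 : snake r ⟨d + 1, hd⟩ ∈ X (c + ((2 + (d + 1) : ℕ) : ZMod k)) :=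
          hsmem r ⟨d + 1, hd⟩
        rwa [hgsucc d, ← add_assoc] at h3
      exact hcompl _ _ h1 _ (Or.inr h2)
  · -- edges
    have hsym : ∀ (A B : Set V), (∃ x ∈ A, ∃ y ∈ B, H.Adj x y) →
        ∃ x ∈ B, ∃ y ∈ A, H.Adj x y := by
      rintro A B ⟨x, hx, y, hy, h⟩
      exact ⟨y, hy, x, hx, h.symm⟩
    have e20 : ∀ r : Fin L, snake r ⟨0, hk2⟩ ∈ X ((c + 1) + 1) := by
      intro r
      have h1 := hsmem r ⟨0, hk2⟩
      have h2 : c + ((2 + ((⟨0, hk2⟩ : Fin (k - 2)) : ℕ) : ℕ) : ZMod k) = (c + 1) + 1 := by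
        push_cast
        ring
      rwa [h2] at h1
    have elast : ∀ r : Fin L, snake r ⟨k - 3, by omega⟩ ∈ X (c - 1) := by
      intro r
      have h1 := hsmem r ⟨k - 3, by omega⟩
      rwa [hglast] at h1
    have hAA : ∀ (j1 : Fin (Nat.card (X c))) (r : Fin L),
        ∃ x ∈ ({vert c j1} : Set V), ∃ y ∈ Set.range (snake r), H.Adj x y := by
      intro j1 r
      exact ⟨vert c j1, rfl, snake r ⟨k - 3, by omega⟩, ⟨_, rfl⟩,
        hcompl c _ (hvmem c j1) _ (Or.inl (elast r))⟩
    have hBB : ∀ (j1 : Fin (Nat.card (X (c + 1)))) (r : Fin L),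
        ∃ x ∈ ({vert (c + 1) j1} : Set V), ∃ y ∈ Set.range (snake r), H.Adj x y := by
      intro j1 r
      exact ⟨vert (c + 1) j1, rfl, snake r ⟨0, hk2⟩, ⟨_, rfl⟩,
        hcompl (c + 1) _ (hvmem (c + 1) j1) _ (Or.inr (e20 r))⟩
    have hAB : ∀ (j1 : Fin (Nat.card (X c))) (j2 : Fin (Nat.card (X (c + 1)))),
        ∃ x ∈ ({vert c j1} : Set V), ∃ y ∈ ({vert (c + 1) j2} : Set V), H.Adj x y := by
      intro j1 j2
      exact ⟨vert c j1, rfl, vert (c + 1) j2, rfl,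
        hcompl c _ (hvmem c j1) _ (Or.inr (hvmem (c + 1) j2))⟩
    rintro ((j1 | j1) | r1) ((j2 | j2) | r2) hij <;>
      simp only [hFdef, Sum.elim_inl, Sum.elim_inr]
    · refine ⟨vert c j1, rfl, vert c j2, rfl, hclique c (hvmem c j1) (hvmem c j2) ?_⟩
      intro h
      exact hij (by rw [hvinj c h])
    · exact hAB j1 j2
    · exact hAA j1 r2
    · exact hsym _ _ (hAB j2 j1)
    · refine ⟨vert (c + 1) j1, rfl, vert (c + 1) j2, rfl,
        hclique (c + 1) (hvmem _ j1) (hvmem _ j2) ?_⟩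
      intro h
      exact hij (by rw [hvinj (c + 1) h])
    · exact hBB j1 r2
    · exact hsym _ _ (hAA j2 r1)
    · exact hsym _ _ (hBB j2 r1)
    · refine ⟨snake r1 ⟨0, hk2⟩, ⟨_, rfl⟩, snake r2 ⟨0, hk2⟩, ⟨_, rfl⟩,
        hclique _ (hsmem r1 _) (hsmem r2 _) ?_⟩
      intro h
      have hr : Fin.castLE (hl _) r1 = Fin.castLE (hl _) r2 := hvinj _ h
      exact hij (by rw [Fin.castLE_injective _ hr])

/-- Every hyperhole `H` contains the complete graph `K_{χ(H)}` as a minor. -/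
theorem hyperhole_hasCompleteMinor_chromaticNumber {V : Type} [Fintype V]
    (H : SimpleGraph V) (hH : ∃ k, 4 ≤ k ∧ IsHyperhole H k) :
    ∃ n : ℕ, H.chromaticNumber = (n : ℕ∞) ∧ HasCompleteMinor H n := by
  classical
  obtain ⟨k, hk4, X, hP⟩ := hH
  haveI : NeZero k := ⟨by omega⟩
  set w : ZMod k → ℕ := fun i => Nat.card (X i) with hwdef
  obtain ⟨W, hWdef⟩ : ∃ W, W = ∑ i : ZMod k, w i := ⟨_, rfl⟩
  set q := k / 2 with hq
  have hq0 : 0 < q := by omega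
  obtain ⟨c, -, hc⟩ := Finset.exists_max_image (Finset.univ : Finset (ZMod k))
    (fun i => w i + w (i + 1)) ⟨0, Finset.mem_univ 0⟩
  have hc' : ∀ i : ZMod k, w i + w (i + 1) ≤ w c + w (c + 1) := fun i => hc i (Finset.mem_univ i)
  set ω := w c + w (c + 1) with hωdef
  obtain ⟨m, hmdef⟩ : ∃ m, m = max ω ((W + q - 1) / q) := ⟨_, rfl⟩
  have hdm := Nat.div_add_mod (W + q - 1) q
  have hmod := Nat.mod_lt (W + q - 1) hq0
  have hWm : W ≤ q * m := by
    have h1 : (W + q - 1) / q ≤ m := by rw [hmdef]; exact le_max_right _ _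
    have h2 : q * ((W + q - 1) / q) ≤ q * m := Nat.mul_le_mul_left q h1
    omega
  have hω0 : 0 < ω := by
    have h1 : (X c).Nonempty := hP.1 c
    haveI : Nonempty (X c) := h1.to_subtype
    have h2 : 0 < w c := Nat.card_pos
    omega
  have hωm : ω ≤ m := by rw [hmdef]; exact le_max_left _ _
  have hm0 : 0 < m := lt_of_lt_of_le hω0 hωm
  have hm_pairs : ∀ i : ZMod k, Nat.card (X i) + Nat.card (X (i + 1)) ≤ m := fun i =>
    le_trans (hc' i) hωm
  have hcol : H.Colorable m := colorable_aux H k hk4 X hP m hm0 hm_pairs (by rw [hWdef] at hWm; exact hWm)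
  have hl : ∀ i : ZMod k, m - ω ≤ w i := by
    intro i
    by_cases hcase : m ≤ ω
    · omega
    · have hm_eq : m = (W + q - 1) / q := by
        rcases max_cases ω ((W + q - 1) / q) with ⟨h1, h2⟩ | ⟨h1, h2⟩ <;> omega
      have h8 : q * m = q * ((W + q - 1) / q) := by rw [hm_eq]
      have h9 : q * m + (W + q - 1) % q = W + q - 1 := by rw [h8]; exact hdm
      have h5 : q * m = q * (m - 1) + q := by
        have h6 : m - 1 + 1 = m := by omega
        calc q * m = q * (m - 1 + 1) := by rw [h6]
          _ = q * (m - 1) + q := Nat.mul_succ q (m - 1)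
      have hlow : q * (m - 1) + 1 ≤ W := by omega
      have hWi : W ≤ w i + q * ω := by rw [hWdef]; exact pair_sum_bound k hk4 w c hc' i
      have h6 : q * (m - 1) = q * ω + q * (m - 1 - ω) := by
        rw [← Nat.mul_add]
        congr 1
        omega
      have h7 : (m - 1 - ω) ≤ q * (m - 1 - ω) := Nat.le_mul_of_pos_left _ hq0
      omega
  have hminor : HasCompleteMinor H m :=
    minor_aux H k hk4 X hP c m hωm hl
  have hχle : H.chromaticNumber ≤ (m : ℕ∞) := hcol.chromaticNumber_le
  have hne_top : H.chromaticNumber ≠ ⊤ :=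
    ne_top_of_le_ne_top (by simp) hχle
  have hn : ((H.chromaticNumber.toNat : ℕ) : ℕ∞) = H.chromaticNumber := ENat.coe_toNat hne_top
  set n := H.chromaticNumber.toNat with hndef
  have hnm : n ≤ m := by
    rw [← hn] at hχle
    exact Nat.cast_le.mp hχle
  exact ⟨n, hn.symm, hasCompleteMinor_mono H hminor hnm⟩
end
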